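/- arXiv:2508.19729 — 5 statements merged into one kernel-verified Lean document; each statement's English description precedes it below -/
import Mathlib

section
/- Under the hypotheses that f is continuous on D_M, |f(x,u)| ≤ M on D_M, f is L-Lipschitz in u on D_M, and q := L/(2(β+1)) < 1, the continuous iterative method defined by φ₀(x) = f(x,0), u_k(x) = α + ∫₀¹ t^β G₀(x,t) φ_k(t) dt, φ_{k+1}(x) = f(x, u_k(x)) converges uniformly on [0,1] to the unique solution u of the Lane–Emden boundary value problem, and the derivatives u_k' converge uniformly to u', with the estimates ‖u_k − u‖_∞ ≤ p_k/(2(β+1)) and ‖u_k' − u'‖_∞ ≤ p_k/(β+1), where p_k = q^k/(1−q) · ‖φ₁ − φ₀‖_∞. -/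
/-- The Green function of the singular operator `u'' + (β/x) u'` with
boundary conditions `u'(0) = 0`, `u(1) = 0`, for `β ≥ 1`. -/
noncomputable def laneEmdenG0 (β x t : ℝ) : ℝ :=
  if β = 1 then (if x ≤ t then Real.log t else Real.log x)
  else (if x ≤ t then (t ^ (1 - β) - 1) / (1 - β) else (x ^ (1 - β) - 1) / (1 - β))

namespace LaneEmdenAux
open Real Set MeasureTheory Filter intervalIntegral

noncomputable def hfun (β x : ℝ) : ℝ := if β = 1 then Real.log x else (x ^ (1 - β) - 1) / (1 - β)
noncomputable def kfun (β t : ℝ) : ℝ := if β = 1 then t * Real.log t else (t - t ^ β) / (1 - β)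
noncomputable def clampI (t : ℝ) : ℝ := max 0 (min t 1)

variable {β x t : ℝ}

lemma G0_eq (β x t : ℝ) : laneEmdenG0 β x t = hfun β (max x t) := by
  by_cases hb : β = 1 <;> by_cases h : x ≤ t
  · simp [laneEmdenG0, hfun, hb, h, max_eq_right h]
  · simp [laneEmdenG0, hfun, hb, h, max_eq_left (not_le.1 h).le]
  · simp [laneEmdenG0, hfun, hb, h, max_eq_right h]
  · simp [laneEmdenG0, hfun, hb, h, max_eq_left (not_le.1 h).le]

lemma clampI_mem (t : ℝ) : clampI t ∈ Icc (0:ℝ) 1 :=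
  ⟨le_max_left _ _, max_le zero_le_one (min_le_right _ _)⟩

lemma clampI_eq (h : t ∈ Icc (0:ℝ) 1) : clampI t = t := by
  simp only [clampI, min_eq_left h.2, max_eq_right h.1]

lemma continuous_clampI : Continuous clampI :=
  continuous_const.max (continuous_id.min continuous_const)

lemma beta_pos (hβ : 1 ≤ β) : 0 < β := lt_of_lt_of_le one_pos hβ

lemma cont_rpow (hβ : 1 ≤ β) : Continuous fun t : ℝ => t ^ β :=
  continuous_iff_continuousAt.2 fun x =>
    Real.continuousAt_rpow_const x β (Or.inr (by linarith))

lemma kfun_continuous (hβ : 1 ≤ β) : Continuous (kfun β) := by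
  by_cases hb : β = 1
  · have : kfun β = fun t => t * Real.log t := by funext t; simp [kfun, hb]
    rw [this]; exact Real.continuous_mul_log
  · have : kfun β = fun t => (t - t ^ β) / (1 - β) := by funext t; simp [kfun, hb]
    rw [this]; exact (continuous_id.sub (cont_rpow hβ)).div_const _

lemma hfun_one : hfun β 1 = 0 := by
  by_cases hb : β = 1 <;> simp [hfun, hb]

lemma hfun_hasDerivAt (hβ : 1 ≤ β) (hx : 0 < x) : HasDerivAt (hfun β) (x ^ (-β)) x := by
  by_cases hb : β = 1
  · have : hfun β = Real.log := by funext y; simp [hfun, hb]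
    rw [this, hb]
    simpa [Real.rpow_neg_one] using Real.hasDerivAt_log hx.ne'
  · have hne : (1:ℝ) - β ≠ 0 := by
      intro h; exact hb (by linarith)
    have h1 : HasDerivAt (fun y : ℝ => (y ^ (1 - β) - 1) / (1 - β))
        (((1 - β) * x ^ (1 - β - 1)) / (1 - β)) x :=
      ((Real.hasDerivAt_rpow_const (Or.inl hx.ne')).sub_const 1).div_const _
    have : hfun β = fun y : ℝ => (y ^ (1 - β) - 1) / (1 - β) := by
      funext y; simp [hfun, hb]
    rw [this]
    have he : (1:ℝ) - β - 1 = -β := by ring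
    rw [he] at h1
    rwa [show (1 - β) * x ^ (-β) / (1 - β) = x ^ (-β) by field_simp] at h1

lemma hfun_nonpos (hβ : 1 ≤ β) (h0 : 0 < x) (h1 : x ≤ 1) : hfun β x ≤ 0 := by
  by_cases hb : β = 1
  · simp only [hfun, if_pos hb]
    exact Real.log_nonpos h0.le h1
  · have hbb : 1 < β := lt_of_le_of_ne hβ (Ne.symm hb)
    simp only [hfun, if_neg hb]
    have : (1:ℝ) ≤ x ^ (1 - β) :=
      Real.one_le_rpow_of_pos_of_le_one_of_nonpos h0 h1 (by linarith)
    rw [div_nonpos_iff]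
    left; constructor <;> linarith

lemma hfun_mono (hβ : 1 ≤ β) (h0 : 0 < t) (htx : t ≤ x) : hfun β t ≤ hfun β x := by
  by_cases hb : β = 1
  · simp only [hfun, if_pos hb]
    exact Real.log_le_log h0 htx
  · simp only [hfun, if_neg hb]
    have hbb : 1 < β := lt_of_le_of_ne hβ (Ne.symm hb)
    have hr : x ^ (1 - β) ≤ t ^ (1 - β) :=
      Real.rpow_le_rpow_of_nonpos h0 htx (by linarith)
    rw [div_eq_mul_inv, div_eq_mul_inv]
    exact mul_le_mul_of_nonpos_right (by linarith) (inv_nonpos.2 (by linarith))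

lemma kfun_zero (hβ : 1 ≤ β) : kfun β 0 = 0 := by
  by_cases hb : β = 1 <;>
    simp [kfun, hb, Real.zero_rpow (by positivity : β ≠ 0)]

lemma kfun_eq (hβ : 1 ≤ β) (ht : 0 ≤ t) : kfun β t = t ^ β * hfun β t := by
  rcases eq_or_lt_of_le ht with h | h
  · rw [← h, kfun_zero hβ, Real.zero_rpow (by positivity : β ≠ 0), zero_mul]
  by_cases hb : β = 1
  · simp [kfun, hfun, hb, Real.rpow_one]
  · simp only [kfun, hfun, if_neg hb]
    have hab : t ^ β * t ^ (1 - β) = t := by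
      rw [← Real.rpow_add h]; norm_num
    rw [mul_div_assoc', mul_sub, mul_one, hab]

lemma kfun_nonpos (hβ : 1 ≤ β) (h0 : 0 ≤ t) (h1 : t ≤ 1) : kfun β t ≤ 0 := by
  rcases eq_or_lt_of_le h0 with h | h
  · rw [← h, kfun_zero hβ]
  · rw [kfun_eq hβ h0]
    exact mul_nonpos_iff.2 (Or.inl ⟨Real.rpow_nonneg h0 β, hfun_nonpos hβ h h1⟩)


variable {ψ ψ₁ ψ₂ : ℝ → ℝ} {D : ℝ}

lemma kfun_integral (hβ : 1 ≤ β) : ∫ t in (0:ℝ)..1, kfun β t = -(1 / (2 * (β + 1))) := by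
  by_cases hb : β = 1
  · have hk : kfun β = fun t => t * Real.log t := by funext t; simp [kfun, hb]
    rw [hk]
    have hA : ContinuousOn (fun t : ℝ => t * (t * Real.log t) / 2 - t ^ 2 / 4) (Icc 0 1) :=
      (((continuous_id.mul Real.continuous_mul_log).div_const 2).sub
        ((continuous_pow 2).div_const 4)).continuousOn
    have hderiv : ∀ y ∈ Ioo (0:ℝ) 1,
        HasDerivWithinAt (fun t : ℝ => t * (t * Real.log t) / 2 - t ^ 2 / 4)
          (y * Real.log y) (Ioi y) y := by
      intro y hy
      have h1 : HasDerivAt (fun t : ℝ => t * (t * Real.log t) / 2 - t ^ 2 / 4)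
          ((1 * (y * Real.log y) + y * (Real.log y + 1)) / 2 - 2 * y ^ 1 / 4) y :=
        (((hasDerivAt_id y).mul (Real.hasDerivAt_mul_log hy.1.ne')).div_const 2).sub
          ((hasDerivAt_pow 2 y).div_const 4)
      have he : (1 * (y * Real.log y) + y * (Real.log y + 1)) / 2 - 2 * y ^ 1 / 4
          = y * Real.log y := by ring
      rw [he] at h1
      exact h1.hasDerivWithinAt
    have hint : IntervalIntegrable (fun t : ℝ => t * Real.log t) volume 0 1 :=
      Real.continuous_mul_log.intervalIntegrable _ _
    rw [intervalIntegral.integral_eq_sub_of_hasDeriv_right_of_le zero_le_one hA hderiv hint]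
    rw [hb]; norm_num [Real.log_one, Real.log_zero]
  · have hk : kfun β = fun t => (t - t ^ β) / (1 - β) := by funext t; simp [kfun, hb]
    rw [hk]
    have h1 : IntervalIntegrable (fun t : ℝ => t) volume 0 1 :=
      continuous_id.intervalIntegrable _ _
    have h2 : IntervalIntegrable (fun t : ℝ => t ^ β) volume 0 1 :=
      (cont_rpow hβ).intervalIntegrable _ _
    rw [intervalIntegral.integral_div, integral_sub h1 h2, integral_id,
      integral_rpow (Or.inl (by linarith : (-1:ℝ) < β)),
      Real.one_rpow, Real.zero_rpow (by positivity : β + 1 ≠ 0)]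
    have hβ1 : (1:ℝ) - β ≠ 0 := fun h => hb (by linarith)
    have hβ2 : β + 1 ≠ 0 := by positivity
    field_simp
    ring

section primitives
variable {ρ : ℝ → ℝ}

lemma primitive_hasDerivAt (hρ : Continuous ρ) (x : ℝ) :
    HasDerivAt (fun y => ∫ t in (0:ℝ)..y, ρ t) (ρ x) x :=
  intervalIntegral.integral_hasDerivAt_right (hρ.intervalIntegrable _ _)
    (hρ.stronglyMeasurableAtFilter _ _) hρ.continuousAt

lemma primitive_continuous (hρ : Continuous ρ) :
    Continuous (fun y => ∫ t in (0:ℝ)..y, ρ t) :=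
  intervalIntegral.continuous_primitive (fun a b => hρ.intervalIntegrable a b) 0

end primitives

noncomputable def Fint (β : ℝ) (ψ : ℝ → ℝ) (x : ℝ) : ℝ := ∫ t in (0:ℝ)..x, t ^ β * ψ (clampI t)
noncomputable def Kint (β : ℝ) (ψ : ℝ → ℝ) (x : ℝ) : ℝ := ∫ t in (0:ℝ)..x, kfun β t * ψ (clampI t)
noncomputable def Tint (β : ℝ) (ψ : ℝ → ℝ) (x : ℝ) : ℝ :=
  ∫ t in (0:ℝ)..1, t ^ β * laneEmdenG0 β x t * ψ t

variable {ψ ψ₁ ψ₂ : ℝ → ℝ} {D : ℝ}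

lemma ctψ (hψ : ContinuousOn ψ (Icc 0 1)) : Continuous fun t => ψ (clampI t) :=
  hψ.comp_continuous continuous_clampI clampI_mem

lemma Fint_hasDerivAt (hβ : 1 ≤ β) (hψ : ContinuousOn ψ (Icc 0 1)) (x : ℝ) :
    HasDerivAt (Fint β ψ) (x ^ β * ψ (clampI x)) x :=
  primitive_hasDerivAt ((cont_rpow hβ).mul (ctψ hψ)) x

lemma Fint_continuous (hβ : 1 ≤ β) (hψ : ContinuousOn ψ (Icc 0 1)) : Continuous (Fint β ψ) :=
  primitive_continuous ((cont_rpow hβ).mul (ctψ hψ))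

lemma Kint_hasDerivAt (hβ : 1 ≤ β) (hψ : ContinuousOn ψ (Icc 0 1)) (x : ℝ) :
    HasDerivAt (Kint β ψ) (kfun β x * ψ (clampI x)) x :=
  primitive_hasDerivAt ((kfun_continuous hβ).mul (ctψ hψ)) x

lemma Kint_continuous (hβ : 1 ≤ β) (hψ : ContinuousOn ψ (Icc 0 1)) : Continuous (Kint β ψ) :=
  primitive_continuous ((kfun_continuous hβ).mul (ctψ hψ))

@[simp] lemma Kint_zero : Kint β ψ 0 = 0 := intervalIntegral.integral_same

lemma hfun_continuousOn (hβ : 1 ≤ β) : ContinuousOn (hfun β) (Ioi 0) := by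
  by_cases hb : β = 1
  · have : hfun β = Real.log := by funext y; simp [hfun, hb]
    rw [this]
    exact Real.continuousOn_log.mono fun y hy => mem_compl_singleton_iff.mpr (ne_of_gt hy)
  · have : hfun β = fun y : ℝ => (y ^ (1 - β) - 1) / (1 - β) := by funext y; simp [hfun, hb]
    rw [this]
    intro y hy
    exact (((Real.continuousAt_rpow_const y (1 - β) (Or.inl (ne_of_gt hy))).sub
      continuousAt_const).div_const _).continuousWithinAt

lemma II_of_contOn {f : ℝ → ℝ} {a b : ℝ} (h : ContinuousOn f (Icc 0 1)) (ha : 0 ≤ a)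
    (hab : a ≤ b) (hb : b ≤ 1) : IntervalIntegrable f volume a b :=
  (h.mono (show uIcc a b ⊆ Icc 0 1 by
    rw [uIcc_of_le hab]; exact Icc_subset_Icc ha hb)).intervalIntegrable

lemma gker_nonpos (hβ : 1 ≤ β) (hx : x ∈ Icc (0:ℝ) 1) (ht : t ∈ Icc (0:ℝ) 1) :
    t ^ β * hfun β (max x t) ≤ 0 := by
  rcases eq_or_lt_of_le ht.1 with h | h
  · rw [← h, Real.zero_rpow (by positivity : β ≠ 0), zero_mul]
  · exact mul_nonpos_iff.2 (Or.inl ⟨Real.rpow_nonneg ht.1 β,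
      hfun_nonpos hβ (lt_of_lt_of_le h (le_max_right x t)) (max_le hx.2 ht.2)⟩)

lemma kfun_le_gker (hβ : 1 ≤ β) (hx : x ∈ Icc (0:ℝ) 1) (ht : t ∈ Icc (0:ℝ) 1) :
    kfun β t ≤ t ^ β * hfun β (max x t) := by
  rcases eq_or_lt_of_le ht.1 with h | h
  · rw [← h, kfun_zero hβ, Real.zero_rpow (by positivity : β ≠ 0), zero_mul]
  · rw [kfun_eq hβ ht.1]
    exact mul_le_mul_of_nonneg_left (hfun_mono hβ h (le_max_right x t))
      (Real.rpow_nonneg ht.1 β)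

lemma gker_contOn (hβ : 1 ≤ β) (hx : x ∈ Icc (0:ℝ) 1) :
    ContinuousOn (fun t => t ^ β * hfun β (max x t)) (Icc 0 1) := by
  rcases eq_or_lt_of_le hx.1 with h | h
  · exact ((kfun_continuous hβ).continuousOn).congr fun t ht => by
      rw [← h, max_eq_right ht.1, ← kfun_eq hβ ht.1]
  · exact ((cont_rpow hβ).continuousOn).mul ((hfun_continuousOn hβ).comp
      ((continuous_const.max continuous_id).continuousOn)
      fun t _ => lt_of_lt_of_le h (le_max_left x t))

lemma Tint_congr (x : ℝ) :
    Tint β ψ x = ∫ t in (0:ℝ)..1, t ^ β * hfun β (max x t) * ψ (clampI t) :=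
  intervalIntegral.integral_congr fun t ht => by
    rw [uIcc_of_le zero_le_one] at ht
    rw [G0_eq, clampI_eq ht]

lemma integrand2_contOn (hβ : 1 ≤ β) (hψ : ContinuousOn ψ (Icc 0 1)) (hx : x ∈ Icc (0:ℝ) 1) :
    ContinuousOn (fun t => t ^ β * hfun β (max x t) * ψ (clampI t)) (Icc 0 1) :=
  (gker_contOn hβ hx).mul (ctψ hψ).continuousOn

lemma Tint_sub (hβ : 1 ≤ β) (h1 : ContinuousOn ψ₁ (Icc 0 1)) (h2 : ContinuousOn ψ₂ (Icc 0 1))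
    (hx : x ∈ Icc (0:ℝ) 1) :
    Tint β ψ₂ x - Tint β ψ₁ x = Tint β (fun t => ψ₂ t - ψ₁ t) x := by
  rw [Tint_congr, Tint_congr, Tint_congr,
    ← integral_sub (II_of_contOn (integrand2_contOn hβ h2 hx) le_rfl zero_le_one le_rfl)
      (II_of_contOn (integrand2_contOn hβ h1 hx) le_rfl zero_le_one le_rfl)]
  exact intervalIntegral.integral_congr fun t _ => by ring

lemma Tint_bound (hβ : 1 ≤ β) (hψ : ContinuousOn ψ (Icc 0 1))
    (hD : ∀ t ∈ Icc (0:ℝ) 1, |ψ t| ≤ D) (hx : x ∈ Icc (0:ℝ) 1) :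
    |Tint β ψ x| ≤ D / (2 * (β + 1)) := by
  have hDc : ∀ t, |ψ (clampI t)| ≤ D := fun t => hD _ (clampI_mem t)
  rw [Tint_congr]
  refine le_trans (intervalIntegral.abs_integral_le_integral_abs zero_le_one) ?_
  have hmono := intervalIntegral.integral_mono_on zero_le_one
    ((II_of_contOn (integrand2_contOn hβ hψ hx) le_rfl zero_le_one le_rfl).abs)
    (((((kfun_continuous hβ).neg).mul (continuous_const (y := D)))).intervalIntegrable 0 1)
    (fun t ht => by
      rw [abs_mul]
      refine mul_le_mul ?_ (hDc t) (abs_nonneg _) (neg_nonneg.2 (kfun_nonpos hβ ht.1 ht.2))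
      rw [abs_of_nonpos (gker_nonpos hβ hx ht)]
      exact neg_le_neg (kfun_le_gker hβ hx ht))
  refine le_trans hmono (le_of_eq ?_)
  have : ∫ t in (0:ℝ)..1, -kfun β t * D = (∫ t in (0:ℝ)..1, -kfun β t) * D :=
    intervalIntegral.integral_mul_const D _
  simp only [Pi.mul_apply, Pi.neg_apply]
  rw [this, intervalIntegral.integral_neg, kfun_integral hβ]
  ring


lemma Fint_sub (hβ : 1 ≤ β) (h1 : ContinuousOn ψ₁ (Icc 0 1)) (h2 : ContinuousOn ψ₂ (Icc 0 1))
    (x : ℝ) : Fint β ψ₂ x - Fint β ψ₁ x = Fint β (fun t => ψ₂ t - ψ₁ t) x := by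
  simp only [Fint]
  rw [← integral_sub (f := fun t => t ^ β * ψ₂ (clampI t)) (g := fun t => t ^ β * ψ₁ (clampI t))
    (((cont_rpow hβ).mul (ctψ h2)).intervalIntegrable 0 x)
    (((cont_rpow hβ).mul (ctψ h1)).intervalIntegrable 0 x)]
  exact intervalIntegral.integral_congr fun t _ => by ring

lemma w_eq (hβ : 1 ≤ β) (hψ : ContinuousOn ψ (Icc 0 1)) (hx : x ∈ Ioc (0:ℝ) 1) :
    Tint β ψ x = hfun β x * Fint β ψ x + (Kint β ψ 1 - Kint β ψ x) := by
  rw [Tint_congr]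
  have hi1 := II_of_contOn (integrand2_contOn hβ hψ ⟨hx.1.le, hx.2⟩) le_rfl hx.1.le hx.2
  have hi2 := II_of_contOn (integrand2_contOn hβ hψ ⟨hx.1.le, hx.2⟩) hx.1.le hx.2 le_rfl
  rw [← integral_add_adjacent_intervals hi1 hi2]
  have hp1 : ∫ t in (0:ℝ)..x, t ^ β * hfun β (max x t) * ψ (clampI t)
      = hfun β x * Fint β ψ x := by
    have : ∫ t in (0:ℝ)..x, t ^ β * hfun β (max x t) * ψ (clampI t)
        = ∫ t in (0:ℝ)..x, hfun β x * (t ^ β * ψ (clampI t)) :=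
      intervalIntegral.integral_congr fun t ht => by
        rw [uIcc_of_le hx.1.le] at ht
        rw [max_eq_left ht.2]; ring
    rw [this, intervalIntegral.integral_const_mul]; rfl
  have hp2 : ∫ t in x..1, t ^ β * hfun β (max x t) * ψ (clampI t)
      = Kint β ψ 1 - Kint β ψ x := by
    have h1 : ∫ t in x..(1:ℝ), t ^ β * hfun β (max x t) * ψ (clampI t)
        = ∫ t in x..(1:ℝ), kfun β t * ψ (clampI t) :=
      intervalIntegral.integral_congr fun t ht => by
        rw [uIcc_of_le hx.2] at ht
        rw [max_eq_right ht.1, ← kfun_eq hβ (le_trans hx.1.le ht.1)]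
    have hk1 : IntervalIntegrable (fun t => kfun β t * ψ (clampI t)) volume 0 x :=
      ((kfun_continuous hβ).mul (ctψ hψ)).intervalIntegrable _ _
    have hk2 : IntervalIntegrable (fun t => kfun β t * ψ (clampI t)) volume x 1 :=
      ((kfun_continuous hβ).mul (ctψ hψ)).intervalIntegrable _ _
    have h2 := integral_add_adjacent_intervals hk1 hk2
    rw [h1]
    have : Kint β ψ x + ∫ t in x..(1:ℝ), kfun β t * ψ (clampI t) = Kint β ψ 1 := h2
    linarith
  rw [hp1, hp2]

lemma w_eq_right (hβ : 1 ≤ β) (hx : 1 ≤ x) :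
    Tint β ψ x = hfun β x * Fint β ψ 1 := by
  rw [Tint_congr]
  have : ∫ t in (0:ℝ)..1, t ^ β * hfun β (max x t) * ψ (clampI t)
      = ∫ t in (0:ℝ)..1, hfun β x * (t ^ β * ψ (clampI t)) :=
    intervalIntegral.integral_congr fun t ht => by
      rw [uIcc_of_le zero_le_one] at ht
      rw [max_eq_left (le_trans ht.2 hx)]; ring
  rw [this, intervalIntegral.integral_const_mul]; rfl

lemma w_zero (hβ : 1 ≤ β) : Tint β ψ 0 = Kint β ψ 1 := by
  rw [Tint_congr]
  exact intervalIntegral.integral_congr fun t ht => by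
    rw [uIcc_of_le zero_le_one] at ht
    rw [max_eq_right ht.1, ← kfun_eq hβ ht.1]

lemma integral_rpow01 (hβ : 1 ≤ β) (h0 : 0 ≤ x) :
    ∫ t in (0:ℝ)..x, t ^ β = x ^ (β + 1) / (β + 1) := by
  rw [integral_rpow (Or.inl (by linarith : (-1:ℝ) < β)),
    Real.zero_rpow (by positivity : β + 1 ≠ 0)]
  ring

lemma Fint_bound (hβ : 1 ≤ β) (hψ : ContinuousOn ψ (Icc 0 1))
    (hDc : ∀ t, |ψ (clampI t)| ≤ D) (h0 : 0 ≤ x) :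
    |Fint β ψ x| ≤ D * x ^ (β + 1) / (β + 1) := by
  refine le_trans (intervalIntegral.abs_integral_le_integral_abs h0) ?_
  have hmono := intervalIntegral.integral_mono_on (μ := volume) h0
    (((cont_rpow hβ).mul (ctψ hψ)).abs.intervalIntegrable 0 x)
    (((cont_rpow hβ).mul (continuous_const (y := D))).intervalIntegrable 0 x)
    (fun t ht => by
      show |t ^ β * ψ (clampI t)| ≤ t ^ β * D
      rw [abs_mul, abs_of_nonneg (Real.rpow_nonneg ht.1 β)]
      exact mul_le_mul_of_nonneg_left (hDc t) (Real.rpow_nonneg ht.1 β))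
  refine le_trans hmono (le_of_eq ?_)
  simp only [Pi.mul_apply]
  rw [intervalIntegral.integral_mul_const, integral_rpow01 hβ h0]
  ring

lemma w_hasDerivAt (hβ : 1 ≤ β) (hψ : ContinuousOn ψ (Icc 0 1)) {a : ℝ} {w : ℝ → ℝ}
    (hw : ∀ y, w y = a + Tint β ψ y) (hx : x ∈ Ioc (0:ℝ) 1) :
    HasDerivAt w (x ^ (-β) * Fint β ψ x) x := by
  have hVw : ∀ y ∈ Ioc (0:ℝ) 1, w y
      = a + (hfun β y * Fint β ψ y + (Kint β ψ 1 - Kint β ψ y)) := fun y hy => by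
    rw [hw, w_eq hβ hψ hy]
  have hVd : ∀ y : ℝ, 0 < y → HasDerivAt
      (fun y => a + (hfun β y * Fint β ψ y + (Kint β ψ 1 - Kint β ψ y)))
      (y ^ (-β) * Fint β ψ y) y := by
    intro y hy
    have h := (hasDerivAt_const y a).add
      (((hfun_hasDerivAt hβ hy).mul (Fint_hasDerivAt hβ hψ y)).add
        ((hasDerivAt_const y (Kint β ψ 1)).sub (Kint_hasDerivAt hβ hψ y)))
    have he : 0 + (y ^ (-β) * Fint β ψ y + hfun β y * (y ^ β * ψ (clampI y))
        + (0 - kfun β y * ψ (clampI y))) = y ^ (-β) * Fint β ψ y := by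
      rw [kfun_eq hβ hy.le]; ring
    rwa [he] at h
  rcases eq_or_lt_of_le hx.2 with h1 | h1
  · subst h1
    have hd1 : HasDerivWithinAt w ((1:ℝ) ^ (-β) * Fint β ψ 1) (Ioc 0 1) 1 :=
      ((hVd 1 one_pos).hasDerivWithinAt).congr (fun y hy => hVw y hy)
        (hVw 1 ⟨one_pos, le_rfl⟩)
    have hV2d : HasDerivAt (fun y => a + hfun β y * Fint β ψ 1)
        ((1:ℝ) ^ (-β) * Fint β ψ 1) 1 := by
      have h := (hasDerivAt_const (1:ℝ) a).add
        ((hfun_hasDerivAt hβ one_pos).mul_const (Fint β ψ 1))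
      rwa [zero_add] at h
    have hd2 : HasDerivWithinAt w ((1:ℝ) ^ (-β) * Fint β ψ 1) (Ici 1) 1 :=
      (hV2d.hasDerivWithinAt).congr (fun y hy => by rw [hw, w_eq_right hβ hy])
        (by rw [hw, w_eq_right hβ le_rfl])
    have hu := hd1.union hd2
    rw [Ioc_union_Ici_eq_Ioi one_pos] at hu
    exact hu.hasDerivAt (Ioi_mem_nhds one_pos)
  · exact (hVd x hx.1).congr_of_eventuallyEq <| Filter.eventually_of_mem
      (Ioo_mem_nhds hx.1 h1) fun y hy => hVw y ⟨hy.1, hy.2.le⟩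

lemma w'_hasDerivAt (hβ : 1 ≤ β) (hψ : ContinuousOn ψ (Icc 0 1)) (hx : x ∈ Ioc (0:ℝ) 1) :
    HasDerivAt (fun y => y ^ (-β) * Fint β ψ y)
      (-β * x ^ (-β - 1) * Fint β ψ x + ψ (clampI x)) x := by
  have h := (Real.hasDerivAt_rpow_const (p := -β) (Or.inl hx.1.ne')).mul
    (Fint_hasDerivAt hβ hψ x)
  have hxx : x ^ (-β) * x ^ β = 1 := by
    rw [← Real.rpow_add hx.1]; simp
  have he : -β * x ^ (-β - 1) * Fint β ψ x + x ^ (-β) * (x ^ β * ψ (clampI x))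
      = -β * x ^ (-β - 1) * Fint β ψ x + ψ (clampI x) := by
    rw [show x ^ (-β) * (x ^ β * ψ (clampI x)) = x ^ (-β) * x ^ β * ψ (clampI x) by ring,
      hxx, one_mul]
  rwa [he] at h

lemma w_contOn (hβ : 1 ≤ β) (hψ : ContinuousOn ψ (Icc 0 1))
    (hD : ∀ t ∈ Icc (0:ℝ) 1, |ψ t| ≤ D) {a : ℝ} {w : ℝ → ℝ}
    (hw : ∀ y, w y = a + Tint β ψ y) : ContinuousOn w (Icc 0 1) := by
  have hDc : ∀ t, |ψ (clampI t)| ≤ D := fun t => hD _ (clampI_mem t)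
  have hD0 : 0 ≤ D := le_trans (abs_nonneg _) (hDc 0)
  intro x hx
  rcases eq_or_lt_of_le hx.1 with h0 | h0
  swap
  · exact (w_hasDerivAt hβ hψ hw ⟨h0, hx.2⟩).continuousAt.continuousWithinAt
  subst h0
  have hw0 : w 0 = a + Kint β ψ 1 := by rw [hw, w_zero hβ]
  set Nneg : ℝ → ℝ := fun y => ∫ t in (0:ℝ)..y, -kfun β t with hNdef
  have key : ∀ y ∈ Icc (0:ℝ) 1, |w y - w 0| ≤ 2 * D * Nneg y := by
    intro y hy
    rcases eq_or_lt_of_le hy.1 with hy0 | hy0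
    · rw [← hy0]
      simp [hNdef, intervalIntegral.integral_same]
    · have hyIoc : y ∈ Ioc (0:ℝ) 1 := ⟨hy0, hy.2⟩
      rw [hw, w_eq hβ hψ hyIoc, hw0,
        show a + (hfun β y * Fint β ψ y + (Kint β ψ 1 - Kint β ψ y)) - (a + Kint β ψ 1)
          = hfun β y * Fint β ψ y - Kint β ψ y by ring]
      have hA : |hfun β y * Fint β ψ y| ≤ D * Nneg y := by
        have hclaim : -hfun β y * (y ^ (β + 1) / (β + 1)) ≤ Nneg y := by
          have hmono := intervalIntegral.integral_mono_on (μ := volume) hy0.le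
            (((cont_rpow hβ).mul (continuous_const (y := -hfun β y))).intervalIntegrable 0 y)
            (((kfun_continuous hβ).neg).intervalIntegrable 0 y)
            (fun t ht => by
              show t ^ β * (-hfun β y) ≤ -kfun β t
              rcases eq_or_lt_of_le ht.1 with ht0 | ht0
              · rw [← ht0, Real.zero_rpow (by positivity : β ≠ 0), zero_mul,
                  kfun_zero hβ, neg_zero]
              · rw [kfun_eq hβ ht.1]
                have := hfun_mono hβ ht0 ht.2
                nlinarith [Real.rpow_nonneg ht.1 β])
          simp only [Pi.mul_apply, Pi.neg_apply] at hmono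
          rwa [intervalIntegral.integral_mul_const, integral_rpow01 hβ hy0.le,
            show y ^ (β + 1) / (β + 1) * -hfun β y = -hfun β y * (y ^ (β + 1) / (β + 1))
              by ring] at hmono
        have hFb := Fint_bound hβ hψ hDc hy0.le
        have hh : |hfun β y| = -hfun β y := abs_of_nonpos (hfun_nonpos hβ hy0 hy.2)
        have hhnn : 0 ≤ -hfun β y := neg_nonneg.2 (hfun_nonpos hβ hy0 hy.2)
        calc |hfun β y * Fint β ψ y| = -hfun β y * |Fint β ψ y| := by rw [abs_mul, hh]
          _ ≤ -hfun β y * (D * y ^ (β + 1) / (β + 1)) :=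
              mul_le_mul_of_nonneg_left hFb hhnn
          _ = D * (-hfun β y * (y ^ (β + 1) / (β + 1))) := by ring
          _ ≤ D * Nneg y := mul_le_mul_of_nonneg_left hclaim hD0
      have hB : |Kint β ψ y| ≤ D * Nneg y := by
        refine le_trans (intervalIntegral.abs_integral_le_integral_abs hy0.le) ?_
        have hmono := intervalIntegral.integral_mono_on (μ := volume) hy0.le
          (((kfun_continuous hβ).mul (ctψ hψ)).abs.intervalIntegrable 0 y)
          ((((kfun_continuous hβ).neg).mul (continuous_const (y := D))).intervalIntegrable 0 y)
          (fun t ht => by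
            show |kfun β t * ψ (clampI t)| ≤ -kfun β t * D
            rw [abs_mul, abs_of_nonpos (kfun_nonpos hβ ht.1 (le_trans ht.2 hy.2))]
            exact mul_le_mul_of_nonneg_left (hDc t)
              (neg_nonneg.2 (kfun_nonpos hβ ht.1 (le_trans ht.2 hy.2))))
        refine le_trans hmono (le_of_eq ?_)
        simp only [Pi.mul_apply, Pi.neg_apply]
        rw [intervalIntegral.integral_mul_const]
        ring
      calc |hfun β y * Fint β ψ y - Kint β ψ y|
          ≤ |hfun β y * Fint β ψ y| + |Kint β ψ y| := abs_sub _ _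
        _ ≤ D * Nneg y + D * Nneg y := add_le_add hA hB
        _ = 2 * D * Nneg y := by ring
  have hNc : Continuous Nneg := primitive_continuous ((kfun_continuous hβ).neg)
  have hN0 : Nneg 0 = 0 := intervalIntegral.integral_same
  have hN : Tendsto (fun y => 2 * D * Nneg y) (nhdsWithin 0 (Icc 0 1)) (nhds 0) := by
    have h1 : Tendsto (fun y => 2 * D * Nneg y) (nhds 0) (nhds (2 * D * Nneg 0)) :=
      ((continuous_const (y := 2 * D)).mul hNc).tendsto 0
    rw [hN0, mul_zero] at h1
    exact h1.mono_left (nhdsWithin_le_nhds (s := Icc (0:ℝ) 1))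
  have habs : Tendsto (fun y => |w y - w 0|) (nhdsWithin 0 (Icc 0 1)) (nhds 0) :=
    squeeze_zero' (Filter.Eventually.of_forall fun t => abs_nonneg _)
      (eventually_mem_nhdsWithin.mono key) hN
  have : Tendsto w (nhdsWithin 0 (Icc 0 1)) (nhds (w 0)) := by
    rw [tendsto_iff_dist_tendsto_zero]
    simpa [Real.dist_eq] using habs
  exact this


end LaneEmdenAux

/-- A solution of the Lane–Emden boundary value problem
`u'' + (β/x) u' = f(x,u)` on `(0,1]` with `u'(0) = 0` and `u(1) = α`. -/
def IsLaneEmdenSolution (β α : ℝ) (f : ℝ → ℝ → ℝ) (u : ℝ → ℝ) : Prop :=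
  ContinuousOn u (Set.Icc 0 1) ∧
  ∃ u' u'' : ℝ → ℝ,
    (∀ x ∈ Set.Ioc (0:ℝ) 1, HasDerivAt u (u' x) x) ∧
    (∀ x ∈ Set.Ioc (0:ℝ) 1, HasDerivAt u' (u'' x) x) ∧
    ContinuousOn u'' (Set.Ioc 0 1) ∧
    (∀ x ∈ Set.Ioc (0:ℝ) 1, u'' x + (β / x) * u' x = f x (u x)) ∧
    Filter.Tendsto u' (nhdsWithin 0 (Set.Ioi 0)) (nhds 0) ∧
    u 1 = α

open LaneEmdenAux Real Set MeasureTheory Filter intervalIntegral in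
/-- Theorem 2 of the paper: the continuous iterative method
`φ₀(x) = f(x,0)`, `u_k(x) = α + ∫₀¹ t^β G₀(x,t) φ_k(t) dt`,
`φ_{k+1}(x) = f(x,u_k(x))` converges uniformly on `[0,1]` to the unique
solution `u` of the Lane–Emden problem, the derivatives converge uniformly to
`u'`, and `‖u_k − u‖ ≤ p_k/(2(β+1))`, `‖u_k' − u'‖ ≤ p_k/(β+1)` with
`p_k = q^k/(1−q) ‖φ₁ − φ₀‖`. -/
theorem laneEmden_continuous_iteration_converges
    (β α M L : ℝ) (f : ℝ → ℝ → ℝ)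
    (hβ : 1 ≤ β) (hM : 0 < M) (hL : 0 ≤ L)
    (hcont : ContinuousOn (fun p : ℝ × ℝ => f p.1 p.2)
      {p : ℝ × ℝ | p.1 ∈ Set.Icc (0:ℝ) 1 ∧ |p.2| ≤ |α| + M / (2 * (β + 1))})
    (hbound : ∀ x u : ℝ, x ∈ Set.Icc (0:ℝ) 1 → |u| ≤ |α| + M / (2 * (β + 1)) →
      |f x u| ≤ M)
    (hlip : ∀ x u₁ u₂ : ℝ, x ∈ Set.Icc (0:ℝ) 1 → |u₁| ≤ |α| + M / (2 * (β + 1)) →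
      |u₂| ≤ |α| + M / (2 * (β + 1)) → |f x u₂ - f x u₁| ≤ L * |u₂ - u₁|)
    (hq : L / (2 * (β + 1)) < 1)
    (φ : ℕ → ℝ → ℝ) (uk : ℕ → ℝ → ℝ)
    (hφ0 : ∀ x : ℝ, φ 0 x = f x 0)
    (huk : ∀ (k : ℕ) (x : ℝ),
      uk k x = α + ∫ t in (0:ℝ)..1, t ^ β * laneEmdenG0 β x t * φ k t)
    (hφs : ∀ (k : ℕ) (x : ℝ), φ (k + 1) x = f x (uk k x)) :
    ∃ u : ℝ → ℝ, IsLaneEmdenSolution β α f u ∧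
      TendstoUniformlyOn (fun k => uk k) u Filter.atTop (Set.Icc 0 1) ∧
      TendstoUniformlyOn (fun k x => deriv (uk k) x) (deriv u) Filter.atTop
        (Set.Ioc 0 1) ∧
      ∀ k : ℕ,
        (∀ x ∈ Set.Icc (0:ℝ) 1, |uk k x - u x| ≤
          ((L / (2 * (β + 1))) ^ k / (1 - L / (2 * (β + 1))) *
            (⨆ t ∈ Set.Icc (0:ℝ) 1, |φ 1 t - φ 0 t|)) / (2 * (β + 1))) ∧
        (∀ x ∈ Set.Ioc (0:ℝ) 1, |deriv (uk k) x - deriv u x| ≤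
          ((L / (2 * (β + 1))) ^ k / (1 - L / (2 * (β + 1))) *
            (⨆ t ∈ Set.Icc (0:ℝ) 1, |φ 1 t - φ 0 t|)) / (β + 1)) := by
  classical
  have hb1 : (0:ℝ) < β + 1 := by linarith
  have hden : (0:ℝ) < 2 * (β + 1) := by linarith
  set q : ℝ := L / (2 * (β + 1)) with hqdef
  have hq0 : 0 ≤ q := div_nonneg hL hden.le
  have hq1 : 0 < 1 - q := by linarith
  set S : ℝ := ⨆ t ∈ Set.Icc (0:ℝ) 1, |φ 1 t - φ 0 t| with hSdef
  set c : ℝ := |α| + M / (2 * (β + 1)) with hcdef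
  have hc0 : 0 ≤ c := by positivity
  have hukT : ∀ k x, uk k x = α + Tint β (φ k) x := fun k x => huk k x
  -- induction: continuity and bounds for φ k and uk k
  have ukprop : ∀ k, (ContinuousOn (φ k) (Icc 0 1) ∧ ∀ t ∈ Icc (0:ℝ) 1, |φ k t| ≤ M) →
      (ContinuousOn (uk k) (Icc 0 1) ∧ ∀ x ∈ Icc (0:ℝ) 1, |uk k x| ≤ c) := by
    rintro k ⟨h1, h2⟩
    refine ⟨w_contOn hβ h1 h2 (hukT k), fun x hx => ?_⟩
    have hb : |uk k x - α| ≤ M / (2 * (β + 1)) := by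
      rw [hukT k, add_sub_cancel_left]
      exact Tint_bound hβ h1 h2 hx
    calc |uk k x| = |α + (uk k x - α)| := by ring_nf
      _ ≤ |α| + |uk k x - α| := abs_add_le _ _
      _ ≤ c := by rw [hcdef]; linarith
  have key : ∀ k, ContinuousOn (φ k) (Icc 0 1) ∧ ∀ t ∈ Icc (0:ℝ) 1, |φ k t| ≤ M := by
    intro k
    induction k with
    | zero =>
      constructor
      · have h0 : ContinuousOn ((fun p : ℝ × ℝ => f p.1 p.2) ∘ fun x : ℝ => (x, (0:ℝ)))
            (Icc 0 1) :=
          hcont.comp (continuousOn_id.prodMk continuousOn_const)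
            (fun x hx => ⟨hx, by rw [abs_zero]; positivity⟩)
        exact h0.congr fun x hx => hφ0 x
      · intro t ht
        rw [hφ0]
        exact hbound t 0 ht (by rw [abs_zero]; positivity)
    | succ k ih =>
      obtain ⟨hukc, hukb⟩ := ukprop k ih
      constructor
      · have h0 : ContinuousOn ((fun p : ℝ × ℝ => f p.1 p.2) ∘ fun x : ℝ => (x, uk k x))
            (Icc 0 1) :=
          hcont.comp (continuousOn_id.prodMk hukc) (fun x hx => ⟨hx, hukb x hx⟩)
        exact h0.congr fun x hx => hφs k x
      · intro t ht
        rw [hφs]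
        exact hbound t (uk k t) ht (hukb t ht)
  have ukkey : ∀ k, ContinuousOn (uk k) (Icc 0 1) ∧ ∀ x ∈ Icc (0:ℝ) 1, |uk k x| ≤ c :=
    fun k => ukprop k (key k)
  -- supremum S facts
  have hg : ∀ t : ℝ, (⨆ _ : t ∈ Icc (0:ℝ) 1, |φ 1 t - φ 0 t|) ≤ 2 * M := by
    intro t
    refine Real.iSup_le (fun ht => ?_) (by positivity)
    calc |φ 1 t - φ 0 t| ≤ |φ 1 t| + |φ 0 t| := abs_sub _ _
      _ ≤ 2 * M := by linarith [(key 1).2 t ht, (key 0).2 t ht]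
  have hS0 : 0 ≤ S := Real.iSup_nonneg fun t => Real.iSup_nonneg fun _ => abs_nonneg _
  have hSle : ∀ t ∈ Icc (0:ℝ) 1, |φ 1 t - φ 0 t| ≤ S := by
    intro t ht
    have h1 : |φ 1 t - φ 0 t| = ⨆ _ : t ∈ Icc (0:ℝ) 1, |φ 1 t - φ 0 t| :=
      (ciSup_pos (f := fun _ : t ∈ Icc (0:ℝ) 1 => |φ 1 t - φ 0 t|) ht).symm
    rw [hSdef, h1]
    exact le_ciSup ⟨2 * M, by rintro y ⟨t', rfl⟩; exact hg t'⟩ t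
  -- contraction estimate for φ
  have hqS : ∀ k, ∀ x ∈ Icc (0:ℝ) 1, |φ (k+1) x - φ k x| ≤ q ^ k * S := by
    intro k
    induction k with
    | zero => intro x hx; rw [pow_zero, one_mul]; exact hSle x hx
    | succ k ih =>
      intro x hx
      have hukdiff : ∀ y ∈ Icc (0:ℝ) 1, |uk (k+1) y - uk k y| ≤ q ^ k * S / (2*(β+1)) := by
        intro y hy
        rw [hukT, hukT,
          show (α + Tint β (φ (k+1)) y) - (α + Tint β (φ k) y)
            = Tint β (φ (k+1)) y - Tint β (φ k) y by ring,
          Tint_sub hβ (key k).1 (key (k+1)).1 hy]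
        exact Tint_bound hβ ((key (k+1)).1.sub (key k).1) (fun t ht => ih t ht) hy
      rw [hφs (k+1), hφs k]
      calc |f x (uk (k+1) x) - f x (uk k x)| ≤ L * |uk (k+1) x - uk k x| :=
          hlip x (uk k x) (uk (k+1) x) hx ((ukkey k).2 x hx) ((ukkey (k+1)).2 x hx)
        _ ≤ L * (q ^ k * S / (2*(β+1))) :=
          mul_le_mul_of_nonneg_left (hukdiff x hx) hL
        _ = q ^ (k+1) * S := by
          rw [hqdef, pow_succ]
          field_simp
  have hdiffk : ∀ n, ∀ x ∈ Icc (0:ℝ) 1, |uk (n+1) x - uk n x| ≤ q ^ n * S / (2*(β+1)) := by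
    intro n x hx
    rw [hukT, hukT,
      show (α + Tint β (φ (n+1)) x) - (α + Tint β (φ n) x)
        = Tint β (φ (n+1)) x - Tint β (φ n) x by ring,
      Tint_sub hβ (key n).1 (key (n+1)).1 hx]
    exact Tint_bound hβ ((key (n+1)).1.sub (key n).1) (fun t ht => hqS n t ht) hx
  -- Cauchy sequence and limit v
  have hdistk : ∀ x ∈ Icc (0:ℝ) 1, ∀ n, dist (uk n x) (uk (n+1) x) ≤ S / (2*(β+1)) * q ^ n := by
    intro x hx n
    rw [Real.dist_eq, abs_sub_comm]
    calc |uk (n+1) x - uk n x| ≤ q ^ n * S / (2*(β+1)) := hdiffk n x hx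
      _ = S / (2*(β+1)) * q ^ n := by ring
  have hcauchy : ∀ x ∈ Icc (0:ℝ) 1, CauchySeq (fun k => uk k x) := fun x hx =>
    cauchySeq_of_le_geometric q (S / (2*(β+1))) hq (hdistk x hx)
  set v : ℝ → ℝ := fun x => limUnder atTop (fun k => uk k x) with hvdef
  have hvt : ∀ x ∈ Icc (0:ℝ) 1, Tendsto (fun k => uk k x) atTop (nhds (v x)) :=
    fun x hx => (hcauchy x hx).tendsto_limUnder
  have hvdist : ∀ n, ∀ x ∈ Icc (0:ℝ) 1,
      |uk n x - v x| ≤ S / (2*(β+1)) * q ^ n / (1 - q) := by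
    intro n x hx
    have := dist_le_of_le_geometric_of_tendsto q (S / (2*(β+1))) hq (hdistk x hx)
      (hvt x hx) n
    rwa [Real.dist_eq] at this
  have hvb : ∀ x ∈ Icc (0:ℝ) 1, |v x| ≤ c := by
    intro x hx
    exact le_of_tendsto (hvt x hx).abs
      (Filter.Eventually.of_forall fun k => (ukkey k).2 x hx)
  have hp0 : Tendsto (fun k : ℕ => q ^ k) atTop (nhds 0) :=
    tendsto_pow_atTop_nhds_zero_of_lt_one hq0 hq
  have huniv : TendstoUniformlyOn (fun k => uk k) v atTop (Icc 0 1) := by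
    rw [Metric.tendstoUniformlyOn_iff]
    intro ε hε
    have hbz : Tendsto (fun n : ℕ => S / (2*(β+1)) * q ^ n / (1 - q)) atTop (nhds 0) := by
      have h1 := (hp0.const_mul (S / (2*(β+1)))).div_const (1 - q)
      simpa using h1
    filter_upwards [hbz (Iio_mem_nhds hε)] with n hn x hx
    rw [dist_comm, Real.dist_eq]
    exact lt_of_le_of_lt (hvdist n x hx) hn
  have hvcont : ContinuousOn v (Icc 0 1) :=
    huniv.continuousOn (Filter.Eventually.of_forall fun k => (ukkey k).1).frequently
  -- the limit data
  set φI : ℝ → ℝ := fun x => f x (v x) with hφIdef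
  have hφIcont : ContinuousOn φI (Icc 0 1) := by
    have h0 : ContinuousOn ((fun p : ℝ × ℝ => f p.1 p.2) ∘ fun x : ℝ => (x, v x))
        (Icc 0 1) :=
      hcont.comp (continuousOn_id.prodMk hvcont) (fun x hx => ⟨hx, hvb x hx⟩)
    exact h0
  have hφIb : ∀ t ∈ Icc (0:ℝ) 1, |φI t| ≤ M := fun t ht => hbound t (v t) ht (hvb t ht)
  set u : ℝ → ℝ := fun x => α + Tint β φI x with hudef
  have huT : ∀ y, u y = α + Tint β φI y := fun y => rfl
  -- distance from φ k to φI
  have hφd : ∀ k, ∀ x ∈ Icc (0:ℝ) 1, |φ k x - φI x| ≤ q ^ k / (1 - q) * S := by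
    have hsucc : ∀ k, ∀ x ∈ Icc (0:ℝ) 1, |φ (k+1) x - φI x| ≤ q ^ (k+1) / (1 - q) * S := by
      intro k x hx
      rw [hφs k]
      calc |f x (uk k x) - f x (v x)| ≤ L * |uk k x - v x| :=
          hlip x (v x) (uk k x) hx (hvb x hx) ((ukkey k).2 x hx)
        _ ≤ L * (S / (2*(β+1)) * q ^ k / (1 - q)) :=
          mul_le_mul_of_nonneg_left (hvdist k x hx) hL
        _ = q ^ (k+1) / (1 - q) * S := by
          rw [hqdef, pow_succ]
          field_simp
    intro k
    cases k with
    | zero =>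
      intro x hx
      have h1 : |φ 0 x - φI x| ≤ |φ 1 x - φ 0 x| + |φ 1 x - φI x| := by
        have := abs_sub (φ 0 x - φI x + (φ 1 x - φ 0 x)) (φ 1 x - φ 0 x)
        calc |φ 0 x - φI x| = |(φ 1 x - φI x) - (φ 1 x - φ 0 x)| := by ring_nf
          _ ≤ |φ 1 x - φI x| + |φ 1 x - φ 0 x| := abs_sub _ _
          _ = |φ 1 x - φ 0 x| + |φ 1 x - φI x| := by ring
      calc |φ 0 x - φI x| ≤ |φ 1 x - φ 0 x| + |φ 1 x - φI x| := h1
        _ ≤ q ^ 0 * S + q ^ 1 / (1 - q) * S := add_le_add (hqS 0 x hx) (hsucc 0 x hx)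
        _ = q ^ 0 / (1 - q) * S := by
          field_simp
          ring
    | succ k => exact hsucc k
  -- distance from uk k to u
  have hdiffu : ∀ k, ∀ x ∈ Icc (0:ℝ) 1, |uk k x - u x| ≤ (q ^ k / (1 - q) * S) / (2*(β+1)) := by
    intro k x hx
    rw [hukT, huT,
      show (α + Tint β (φ k) x) - (α + Tint β φI x) = Tint β (φ k) x - Tint β φI x by ring,
      Tint_sub hβ hφIcont (key k).1 hx]
    exact Tint_bound hβ ((key k).1.sub hφIcont) (fun t ht => hφd k t ht) hx
  have hbz2 : Tendsto (fun k : ℕ => (q ^ k / (1 - q) * S) / (2*(β+1))) atTop (nhds 0) := by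
    have h1 := (((hp0.div_const (1 - q)).mul_const S).div_const (2*(β+1)))
    simpa using h1
  have huv : ∀ x ∈ Icc (0:ℝ) 1, u x = v x := by
    intro x hx
    have h1 : Tendsto (fun k => uk k x) atTop (nhds (u x)) := by
      rw [tendsto_iff_dist_tendsto_zero]
      refine squeeze_zero (fun k => dist_nonneg)
        (fun k => by rw [Real.dist_eq]; exact hdiffu k x hx) hbz2
    exact tendsto_nhds_unique h1 (hvt x hx)
  have hpk0 : ∀ k : ℕ, 0 ≤ q ^ k / (1 - q) * S :=
    fun k => mul_nonneg (div_nonneg (pow_nonneg hq0 k) hq1.le) hS0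
  -- derivatives
  have hukd : ∀ k, ∀ x ∈ Ioc (0:ℝ) 1, HasDerivAt (uk k) (x ^ (-β) * Fint β (φ k) x) x :=
    fun k x hx => w_hasDerivAt hβ (key k).1 (hukT k) hx
  have hud : ∀ x ∈ Ioc (0:ℝ) 1, HasDerivAt u (x ^ (-β) * Fint β φI x) x :=
    fun x hx => w_hasDerivAt hβ hφIcont huT hx
  have hderivdiff : ∀ k, ∀ x ∈ Ioc (0:ℝ) 1,
      |deriv (uk k) x - deriv u x| ≤ (q ^ k / (1 - q) * S) / (β + 1) := by
    intro k x hx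
    rw [(hukd k x hx).deriv, (hud x hx).deriv, ← mul_sub, abs_mul,
      abs_of_nonneg (Real.rpow_nonneg hx.1.le _),
      Fint_sub hβ hφIcont (key k).1 x]
    have hFb : |Fint β (fun t => φ k t - φI t) x|
        ≤ (q ^ k / (1 - q) * S) * x ^ (β + 1) / (β + 1) :=
      Fint_bound hβ ((key k).1.sub hφIcont)
        (fun t => hφd k (clampI t) (clampI_mem t)) hx.1.le
    have hxx : x ^ (-β) * x ^ (β + 1) = x := by
      rw [← Real.rpow_add hx.1, show -β + (β + 1) = 1 by ring, Real.rpow_one]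
    calc x ^ (-β) * |Fint β (fun t => φ k t - φI t) x|
        ≤ x ^ (-β) * ((q ^ k / (1 - q) * S) * x ^ (β + 1) / (β + 1)) :=
          mul_le_mul_of_nonneg_left hFb (Real.rpow_nonneg hx.1.le _)
      _ = (q ^ k / (1 - q) * S) * (x ^ (-β) * x ^ (β + 1)) / (β + 1) := by ring
      _ = (q ^ k / (1 - q) * S) * x / (β + 1) := by rw [hxx]
      _ ≤ (q ^ k / (1 - q) * S) * 1 / (β + 1) := by
          have := hpk0 k
          gcongr
          exact hx.2
      _ = (q ^ k / (1 - q) * S) / (β + 1) := by ring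
  refine ⟨u, ⟨?_, ?_⟩, ?_, ?_, ?_⟩
  · -- continuity of u
    exact w_contOn hβ hφIcont hφIb huT
  · -- the ODE data
    refine ⟨fun x => x ^ (-β) * Fint β φI x,
      fun x => -β * x ^ (-β - 1) * Fint β φI x + φI x, hud, ?_, ?_, ?_, ?_, ?_⟩
    · intro x hx
      have h := w'_hasDerivAt hβ hφIcont hx
      rwa [clampI_eq ⟨hx.1.le, hx.2⟩] at h
    · -- continuity of u''
      refine ContinuousOn.add ?_ (hφIcont.mono Ioc_subset_Icc_self)
      refine ContinuousOn.mul ?_ (Fint_continuous hβ hφIcont).continuousOn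
      intro x hx
      exact (continuousAt_const.mul
        (Real.continuousAt_rpow_const x (-β - 1) (Or.inl hx.1.ne'))).continuousWithinAt
    · -- the equation
      intro x hx
      show -β * x ^ (-β - 1) * Fint β φI x + φI x
        + (β / x) * (x ^ (-β) * Fint β φI x) = f x (u x)
      have hx1 : x ^ (-β - 1) = x ^ (-β) * x⁻¹ := by
        rw [show -β - 1 = -β + (-1) by ring, Real.rpow_add hx.1, Real.rpow_neg_one]
      rw [hx1, div_eq_mul_inv]
      have : -β * (x ^ (-β) * x⁻¹) * Fint β φI x + φI x
          + β * x⁻¹ * (x ^ (-β) * Fint β φI x) = φI x := by ring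
      rw [this]
      show f x (v x) = f x (u x)
      rw [huv x ⟨hx.1.le, hx.2⟩]
    · -- u' tends to 0 at 0+
      apply squeeze_zero_norm' (a := fun x => M * x / (β + 1))
      · filter_upwards [Ioo_mem_nhdsGT_of_mem (left_mem_Ico.2 one_pos)] with x hx
        have hFb : |Fint β φI x| ≤ M * x ^ (β + 1) / (β + 1) :=
          Fint_bound hβ hφIcont (fun t => hφIb (clampI t) (clampI_mem t)) hx.1.le
        have hxx : x ^ (-β) * x ^ (β + 1) = x := by
          rw [← Real.rpow_add hx.1, show -β + (β + 1) = 1 by ring, Real.rpow_one]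
        rw [Real.norm_eq_abs, abs_mul, abs_of_nonneg (Real.rpow_nonneg hx.1.le _)]
        calc x ^ (-β) * |Fint β φI x| ≤ x ^ (-β) * (M * x ^ (β + 1) / (β + 1)) :=
            mul_le_mul_of_nonneg_left hFb (Real.rpow_nonneg hx.1.le _)
          _ = M * (x ^ (-β) * x ^ (β + 1)) / (β + 1) := by ring
          _ = M * x / (β + 1) := by rw [hxx]
      · have h1 : Tendsto (fun x : ℝ => M * x / (β + 1)) (nhds 0) (nhds 0) := by
          have := (((continuous_const (y := M)).mul continuous_id).div_const (β + 1)).tendsto 0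
          simpa using this
        exact h1.mono_left nhdsWithin_le_nhds
    · -- u 1 = α
      rw [huT, w_eq hβ hφIcont ⟨one_pos, le_rfl⟩, hfun_one]
      simp
  · -- uniform convergence of uk
    rw [Metric.tendstoUniformlyOn_iff]
    intro ε hε
    filter_upwards [hbz2 (Iio_mem_nhds hε)] with n hn x hx
    rw [dist_comm, Real.dist_eq]
    exact lt_of_le_of_lt (hdiffu n x hx) hn
  · -- uniform convergence of derivatives
    rw [Metric.tendstoUniformlyOn_iff]
    intro ε hε
    have hbz3 : Tendsto (fun k : ℕ => (q ^ k / (1 - q) * S) / (β + 1)) atTop (nhds 0) := by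
      have h1 := (((hp0.div_const (1 - q)).mul_const S).div_const (β + 1))
      simpa using h1
    filter_upwards [hbz3 (Iio_mem_nhds hε)] with n hn x hx
    rw [dist_comm, Real.dist_eq]
    exact lt_of_le_of_lt (hderivdiff n x hx) hn
  · -- the error estimates
    exact fun k => ⟨hdiffu k, hderivdiff k⟩
end

section
/- Let β ≥ 1 be real, α a finite constant, and φ continuous on [0,1]. Then the function u_φ(x) = α + ∫₀¹ t^β G₀(x,t) φ(t) dt satisfies the bounds ‖u_φ‖_∞ ≤ |α| + ‖φ‖_∞/(2(β+1)) and ‖u_φ'‖_∞ ≤ ‖φ‖_∞/(β+1), where ‖·‖_∞ denotes the supremum norm on [0,1]. -/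
open Real intervalIntegral MeasureTheory Set Filter Topology

noncomputable def lg (β s : ℝ) : ℝ := if β = 1 then Real.log s else (s ^ (1 - β) - 1) / (1 - β)
noncomputable def dom (β t : ℝ) : ℝ := if β = 1 then -(t * Real.log t) else (t - t ^ β) / (β - 1)

lemma laneEmdenG0_eq (β x t : ℝ) : laneEmdenG0 β x t = if x ≤ t then lg β t else lg β x := by
  unfold laneEmdenG0 lg; split_ifs <;> simp

lemma lg_one (β : ℝ) : lg β 1 = 0 := by unfold lg; split_ifs <;> simp

lemma lg_nonpos {β s : ℝ} (hβ : 1 ≤ β) (hs : 0 < s) (hs1 : s ≤ 1) : lg β s ≤ 0 := by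
  unfold lg; split_ifs with h
  · exact Real.log_nonpos hs.le hs1
  · have hβ' : 1 < β := lt_of_le_of_ne hβ (Ne.symm h)
    apply div_nonpos_of_nonneg_of_nonpos
    · have : s ^ (0:ℝ) ≤ s ^ (1 - β) := Real.rpow_le_rpow_of_exponent_ge hs hs1 (by linarith)
      simpa using this
    · linarith

lemma lg_mono {β x t : ℝ} (hβ : 1 ≤ β) (hx : 0 < x) (hxt : x ≤ t) : lg β x ≤ lg β t := by
  unfold lg; split_ifs with h
  · exact Real.log_le_log hx hxt
  · have hβ' : 1 < β := lt_of_le_of_ne hβ (Ne.symm h)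
    have : t ^ (1 - β) ≤ x ^ (1 - β) := Real.rpow_le_rpow_of_nonpos hx hxt (by linarith)
    apply div_le_div_of_nonpos_of_le (by linarith)
    linarith

lemma hasDerivAt_lg {β x : ℝ} (hβ : 1 ≤ β) (hx : 0 < x) : HasDerivAt (lg β) (x ^ (-β)) x := by
  unfold lg; split_ifs with h
  · subst h; simpa [Real.rpow_neg_one] using Real.hasDerivAt_log hx.ne'
  · have hβ' : (1:ℝ) - β ≠ 0 := fun hc => h (by linarith)
    have := ((Real.hasDerivAt_rpow_const (p := 1 - β) (Or.inl hx.ne')).sub_const 1).div_const (1 - β)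
    refine this.congr_deriv ?_
    field_simp
    ring_nf

lemma cont_mul_log : ContinuousOn (fun x => x * Real.log x) (Set.Icc (0:ℝ) 1) := by
  intro x hx
  rcases eq_or_lt_of_le hx.1 with h | h
  · subst h
    have h1 : Set.Icc (0:ℝ) 1 = insert 0 (Set.Ioc 0 1) :=
      (Set.Ioc_insert_left (by norm_num : (0:ℝ) ≤ 1)).symm
    rw [ContinuousWithinAt, h1, nhdsWithin_insert]
    simp only [Filter.tendsto_sup]
    constructor
    · simpa using tendsto_pure_nhds (fun x => x * Real.log x) 0
    · have h0 := tendsto_log_mul_rpow_nhdsGT_zero (r := 1) one_pos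
      have h2 : Filter.Tendsto (fun x : ℝ => x * Real.log x) (nhdsWithin 0 (Set.Ioi 0)) (nhds 0) := by
        refine h0.congr' ?_
        filter_upwards [self_mem_nhdsWithin] with y hy
        rw [Real.rpow_one]; ring
      have h3 := h2.mono_left (nhdsWithin_mono _ (Set.Ioc_subset_Ioi_self : Set.Ioc (0:ℝ) 1 ⊆ Set.Ioi 0))
      simpa using h3
  · exact (continuousAt_id.mul (Real.continuousAt_log h.ne')).continuousWithinAt

lemma integral_id_mul_log : ∫ t in (0:ℝ)..1, t * Real.log t = -(1/4) := by
  have hF : ∀ x ∈ Set.Ioo (0:ℝ) 1, HasDerivAt (fun x : ℝ => x * (x * Real.log x) / 2 - x^2/4)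
      (x * Real.log x) x := by
    intro x hx
    have h1 : HasDerivAt (fun x : ℝ => x * Real.log x) (1 * Real.log x + x * x⁻¹) x :=
      (hasDerivAt_id x).mul (Real.hasDerivAt_log hx.1.ne')
    have h2 := ((hasDerivAt_id x).mul h1).div_const 2
    have h3 := ((hasDerivAt_pow 2 x)).div_const 4
    have h4 := h2.sub h3
    refine h4.congr_deriv ?_
    have hx0 : x ≠ 0 := hx.1.ne'
    field_simp
    simp only [id_eq]
    ring
  have hint : IntervalIntegrable (fun t : ℝ => t * Real.log t) volume 0 1 := by
    apply ContinuousOn.intervalIntegrable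
    rw [Set.uIcc_of_le (by norm_num : (0:ℝ) ≤ 1)]
    exact cont_mul_log
  have hcont : ContinuousOn (fun x : ℝ => x * (x * Real.log x) / 2 - x^2/4) (Set.Icc 0 1) := by
    exact ((continuousOn_id.mul cont_mul_log).div_const 2).sub
      ((continuous_pow 2).continuousOn.div_const 4)
  have := intervalIntegral.integral_eq_sub_of_hasDeriv_right_of_le (by norm_num) hcont
    (fun x hx => (hF x hx).hasDerivWithinAt) hint
  rw [this]; norm_num

lemma dom_intervalIntegrable {β : ℝ} (hβ : 1 ≤ β) :
    IntervalIntegrable (dom β) volume 0 1 := by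
  unfold dom
  split_ifs with h
  · apply ContinuousOn.intervalIntegrable
    rw [Set.uIcc_of_le (by norm_num : (0:ℝ) ≤ 1)]
    exact cont_mul_log.neg
  · exact ((continuous_id.sub (Real.continuous_rpow_const (by linarith))).div_const _).intervalIntegrable _ _

lemma integral_dom {β : ℝ} (hβ : 1 ≤ β) :
    ∫ t in (0:ℝ)..1, dom β t = 1 / (2 * (β + 1)) := by
  unfold dom
  rcases eq_or_lt_of_le hβ with h | h
  · subst h
    simp only [eq_self_iff_true, ite_true]
    rw [intervalIntegral.integral_neg, integral_id_mul_log]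
    norm_num
  · simp only [if_neg h.ne']
    have hib : IntervalIntegrable (fun t : ℝ => t ^ β) volume 0 1 :=
      (Real.continuous_rpow_const (by linarith)).intervalIntegrable _ _
    rw [intervalIntegral.integral_div, intervalIntegral.integral_sub intervalIntegrable_id hib,
      integral_id, integral_rpow (Or.inl (by linarith))]
    rw [Real.one_rpow, Real.zero_rpow (by linarith)]
    have h1 : β - 1 ≠ 0 := by linarith
    have h2 : β + 1 ≠ 0 := by linarith
    field_simp
    ring

lemma dom_eq {β t : ℝ} (hβ : 1 ≤ β) (ht : 0 < t) : t ^ β * (-lg β t) = dom β t := by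
  unfold lg dom
  split_ifs with h
  · subst h; rw [Real.rpow_one]; ring
  · have h2 : t ^ β * t ^ (1 - β) = t := by
      rw [← Real.rpow_add ht]; norm_num
    have h1β : (1:ℝ) - β ≠ 0 := fun hc => h (by linarith)
    have hβ1 : β - 1 ≠ 0 := fun hc => h (by linarith)
    field_simp
    linear_combination (1 - β) * h2

lemma G_bound {β x t : ℝ} (hβ : 1 ≤ β) (hx : x ∈ Set.Icc (0:ℝ) 1) (ht : t ∈ Set.Ioc (0:ℝ) 1) :
    t ^ β * |laneEmdenG0 β x t| ≤ dom β t := by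
  rw [← dom_eq hβ ht.1, laneEmdenG0_eq]
  apply mul_le_mul_of_nonneg_left _ (Real.rpow_nonneg ht.1.le β)
  split_ifs with hxt
  · rw [abs_of_nonpos (lg_nonpos hβ ht.1 ht.2)]
  · have htx : t < x := not_le.mp hxt
    rw [abs_of_nonpos (lg_nonpos hβ (ht.1.trans htx) hx.2)]
    exact neg_le_neg (lg_mono hβ ht.1 htx.le)

lemma sup_bound {φ : ℝ → ℝ} (hφ : ContinuousOn φ (Set.Icc 0 1)) :
    (∀ t ∈ Set.Icc (0:ℝ) 1, |φ t| ≤ ⨆ t ∈ Set.Icc (0:ℝ) 1, |φ t|) ∧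
      0 ≤ ⨆ t ∈ Set.Icc (0:ℝ) 1, |φ t| := by
  obtain ⟨Cb, hCb⟩ := isCompact_Icc.exists_bound_of_continuousOn hφ
  have hbdd : BddAbove (Set.range fun t => ⨆ _ : t ∈ Set.Icc (0:ℝ) 1, |φ t|) := by
    refine ⟨max Cb 0, ?_⟩
    rintro y ⟨t, rfl⟩
    show (⨆ _ : t ∈ Set.Icc (0:ℝ) 1, |φ t|) ≤ max Cb 0
    by_cases ht : t ∈ Set.Icc (0:ℝ) 1
    · rw [ciSup_pos ht]
      exact le_max_of_le_left (by simpa using hCb t ht)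
    · have : IsEmpty (t ∈ Set.Icc (0:ℝ) 1) := ⟨ht⟩
      rw [iSup, Set.range_eq_empty, Real.sSup_empty]
      exact le_max_right _ _
  have key : ∀ t ∈ Set.Icc (0:ℝ) 1, |φ t| ≤ ⨆ t ∈ Set.Icc (0:ℝ) 1, |φ t| := by
    intro t ht
    have := le_ciSup hbdd t
    rwa [ciSup_pos ht] at this
  exact ⟨key, (abs_nonneg _).trans (key 0 (by norm_num))⟩

/-- For `β ≥ 1` and `φ` continuous on `[0,1]`, the function
`u_φ(x) = α + ∫₀¹ t^β G₀(x,t) φ(t) dt` satisfies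
`‖u_φ‖_∞ ≤ |α| + ‖φ‖_∞/(2(β+1))` and `‖u_φ'‖_∞ ≤ ‖φ‖_∞/(β+1)`. -/
theorem laneEmden_apriori_bounds
    (β α : ℝ) (hβ : 1 ≤ β) (φ : ℝ → ℝ) (hφ : ContinuousOn φ (Set.Icc 0 1)) :
    (∀ x ∈ Set.Icc (0:ℝ) 1,
      |α + ∫ t in (0:ℝ)..1, t ^ β * laneEmdenG0 β x t * φ t| ≤
        |α| + (⨆ t ∈ Set.Icc (0:ℝ) 1, |φ t|) / (2 * (β + 1))) ∧
    (∀ x ∈ Set.Ioc (0:ℝ) 1,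
      |deriv (fun x => α + ∫ t in (0:ℝ)..1, t ^ β * laneEmdenG0 β x t * φ t) x| ≤
        (⨆ t ∈ Set.Icc (0:ℝ) 1, |φ t|) / (β + 1)) := by
  obtain ⟨hM, hM0⟩ := sup_bound hφ
  set M : ℝ := ⨆ t ∈ Set.Icc (0:ℝ) 1, |φ t| with hMdef
  have hβ0 : (0:ℝ) ≤ β := by linarith
  have hβ1 : (0:ℝ) < β + 1 := by linarith
  have hrpow_cont : Continuous (fun t : ℝ => t ^ β) := Real.continuous_rpow_const hβ0
  -- Part 1
  have part1 : ∀ x ∈ Set.Icc (0:ℝ) 1,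
      |α + ∫ t in (0:ℝ)..1, t ^ β * laneEmdenG0 β x t * φ t| ≤ |α| + M / (2 * (β + 1)) := by
    intro x hx
    refine (abs_add_le _ _).trans (add_le_add le_rfl ?_)
    have hbound : IntervalIntegrable (fun t => M * dom β t) volume 0 1 :=
      (dom_intervalIntegrable hβ).const_mul M
    have hle : ‖∫ t in (0:ℝ)..1, t ^ β * laneEmdenG0 β x t * φ t‖ ≤
        |∫ t in (0:ℝ)..1, M * dom β t| := by
      apply intervalIntegral.norm_integral_le_abs_of_norm_le _ hbound
      rw [Set.uIoc_of_le (by norm_num : (0:ℝ) ≤ 1)]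
      filter_upwards [ae_restrict_mem measurableSet_Ioc] with t ht
      have h1 : |t ^ β * laneEmdenG0 β x t * φ t| = t ^ β * |laneEmdenG0 β x t| * |φ t| := by
        rw [abs_mul, abs_mul, abs_of_nonneg (Real.rpow_nonneg ht.1.le β)]
      rw [Real.norm_eq_abs, h1]
      calc t ^ β * |laneEmdenG0 β x t| * |φ t|
          ≤ dom β t * M := by
            apply mul_le_mul (G_bound hβ hx ht) (hM t ⟨ht.1.le, ht.2⟩) (abs_nonneg _)
            exact le_trans (mul_nonneg (Real.rpow_nonneg ht.1.le β) (abs_nonneg _)) (G_bound hβ hx ht)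
        _ = M * dom β t := by ring
    rw [intervalIntegral.integral_const_mul, integral_dom hβ] at hle
    calc |∫ t in (0:ℝ)..1, t ^ β * laneEmdenG0 β x t * φ t| ≤ |M * (1 / (2 * (β + 1)))| := hle
      _ = M / (2 * (β + 1)) := by
          rw [abs_of_nonneg (by positivity)]; ring
  refine ⟨part1, ?_⟩
  -- Part 2
  set A : ℝ → ℝ := fun x => ∫ t in (0:ℝ)..x, t ^ β * φ t with hAdef
  set D : ℝ → ℝ := fun x => ∫ t in (0:ℝ)..x, t ^ β * lg β t * φ t with hDdef
  have hlg_contOn : ∀ s : Set ℝ, s ⊆ Set.Ioi 0 → ContinuousOn (lg β) s := by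
    intro s hs y hy
    exact ((hasDerivAt_lg hβ (hs hy)).continuousAt).continuousWithinAt
  -- interval integrability of `t ^ β * φ t`
  have hA_ii : ∀ x ∈ Set.Icc (0:ℝ) 1, IntervalIntegrable (fun t => t ^ β * φ t) volume 0 x := by
    intro x hx
    apply ContinuousOn.intervalIntegrable
    rw [Set.uIcc_of_le hx.1]
    exact hrpow_cont.continuousOn.mul (hφ.mono (Set.Icc_subset_Icc le_rfl hx.2))
  -- interval integrability of `t ^ β * lg β t * φ t`
  have hfun_meas : AEStronglyMeasurable (fun t => t ^ β * lg β t * φ t)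
      (volume.restrict (Set.Ioc (0:ℝ) 1)) := by
    apply AEStronglyMeasurable.mul
    · exact (hrpow_cont.continuousOn.mul
        (hlg_contOn _ (fun y hy => hy.1))).aestronglyMeasurable measurableSet_Ioc
    · exact (hφ.mono Set.Ioc_subset_Icc_self).aestronglyMeasurable measurableSet_Ioc
  have hD_ii1 : IntervalIntegrable (fun t => t ^ β * lg β t * φ t) volume 0 1 := by
    rw [intervalIntegrable_iff_integrableOn_Ioc_of_le (by norm_num : (0:ℝ) ≤ 1)]
    apply Integrable.mono' (g := fun t => M * dom β t) _ hfun_meas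
    · filter_upwards [ae_restrict_mem measurableSet_Ioc] with t ht
      rw [Real.norm_eq_abs, abs_mul, abs_mul, abs_of_nonneg (Real.rpow_nonneg ht.1.le β)]
      have hG : t ^ β * |lg β t| = dom β t := by
        rw [abs_of_nonpos (lg_nonpos hβ ht.1 ht.2), dom_eq hβ ht.1]
      calc t ^ β * |lg β t| * |φ t| ≤ (t ^ β * |lg β t|) * M :=
            mul_le_mul_of_nonneg_left (hM t ⟨ht.1.le, ht.2⟩) (mul_nonneg (Real.rpow_nonneg ht.1.le β) (abs_nonneg _))
        _ = M * dom β t := by rw [hG]; ring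
    · have := ((dom_intervalIntegrable hβ).const_mul M).def'
      rwa [Set.uIoc_of_le (by norm_num : (0:ℝ) ≤ 1)] at this
  have hD_ii : ∀ x ∈ Set.Icc (0:ℝ) 1, IntervalIntegrable (fun t => t ^ β * lg β t * φ t) volume 0 x := by
    intro x hx
    apply hD_ii1.mono_set
    rw [Set.uIcc_of_le hx.1, Set.uIcc_of_le (by norm_num : (0:ℝ) ≤ 1)]
    exact Set.Icc_subset_Icc le_rfl hx.2
  -- the key splitting identity
  have key_eq : ∀ x ∈ Set.Ioc (0:ℝ) 1,
      (∫ t in (0:ℝ)..1, t ^ β * laneEmdenG0 β x t * φ t) = lg β x * A x + (D 1 - D x) := by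
    intro x hx
    have e1on : Set.EqOn (fun t => t ^ β * laneEmdenG0 β x t * φ t)
        (fun t => lg β x * (t ^ β * φ t)) (Set.Icc 0 x) := by
      intro t ht
      simp only [laneEmdenG0_eq]
      split_ifs with h
      · rw [le_antisymm ht.2 h]; ring
      · ring
    have e2on : Set.EqOn (fun t => t ^ β * laneEmdenG0 β x t * φ t)
        (fun t => t ^ β * lg β t * φ t) (Set.Icc x 1) := by
      intro t ht
      simp only [laneEmdenG0_eq, if_pos ht.1]
    have i1 : IntervalIntegrable (fun t => t ^ β * laneEmdenG0 β x t * φ t) volume 0 x := by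
      apply ContinuousOn.intervalIntegrable
      rw [Set.uIcc_of_le hx.1.le]
      exact ContinuousOn.congr ((continuousOn_const.mul
        (hrpow_cont.continuousOn.mul (hφ.mono (Set.Icc_subset_Icc le_rfl hx.2))))) e1on
    have i2 : IntervalIntegrable (fun t => t ^ β * laneEmdenG0 β x t * φ t) volume x 1 := by
      apply ContinuousOn.intervalIntegrable
      rw [Set.uIcc_of_le hx.2]
      refine ContinuousOn.congr ?_ e2on
      exact (hrpow_cont.continuousOn.mul (hlg_contOn _ (fun y hy => lt_of_lt_of_le hx.1 hy.1))).mul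
        (hφ.mono (Set.Icc_subset_Icc hx.1.le le_rfl))
    have hsplit := intervalIntegral.integral_add_adjacent_intervals i1 i2
    rw [← hsplit]
    have e1 : ∫ t in (0:ℝ)..x, t ^ β * laneEmdenG0 β x t * φ t = lg β x * A x := by
      rw [intervalIntegral.integral_congr (by rwa [Set.uIcc_of_le hx.1.le] : Set.EqOn _ _ (Set.uIcc 0 x))]
      exact intervalIntegral.integral_const_mul _ _
    have e2 : ∫ t in x..1, t ^ β * laneEmdenG0 β x t * φ t = D 1 - D x := by
      rw [intervalIntegral.integral_congr (by rwa [Set.uIcc_of_le hx.2] : Set.EqOn _ _ (Set.uIcc x 1))]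
      exact (intervalIntegral.integral_interval_sub_left hD_ii1
        (hD_ii x ⟨hx.1.le, hx.2⟩)).symm
    rw [e1, e2]
  -- the derivative
  have hderiv : ∀ x₀ ∈ Set.Ioc (0:ℝ) 1,
      HasDerivAt (fun x => α + ∫ t in (0:ℝ)..1, t ^ β * laneEmdenG0 β x t * φ t)
        (x₀ ^ (-β) * A x₀) x₀ := by
    intro x₀ hx₀
    rcases eq_or_lt_of_le hx₀.2 with h1 | h1
    · -- x₀ = 1
      subst h1
      have hIocmem : Set.Ioc (0:ℝ) 1 ∈ nhdsWithin (1:ℝ) (Set.Iic 1) := by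
        rw [show Set.Ioc (0:ℝ) 1 = Set.Ioi 0 ∩ Set.Iic 1 from rfl]
        exact Filter.inter_mem (mem_nhdsWithin_of_mem_nhds (Ioi_mem_nhds one_pos))
          self_mem_nhdsWithin
      have hIccmem : Set.Icc (0:ℝ) 1 ∈ nhdsWithin (1:ℝ) (Set.Iic 1) := by
        rw [show Set.Icc (0:ℝ) 1 = Set.Ici 0 ∩ Set.Iic 1 from Set.Ici_inter_Iic.symm]
        exact Filter.inter_mem (mem_nhdsWithin_of_mem_nhds (Ici_mem_nhds one_pos))
          self_mem_nhdsWithin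
      have hAm : StronglyMeasurableAtFilter (fun t => t ^ β * φ t)
          (nhdsWithin (1:ℝ) (Set.Iic 1)) volume :=
        ⟨Set.Ioc 0 1, hIocmem, (hrpow_cont.aestronglyMeasurable).mul
          ((hφ.mono Set.Ioc_subset_Icc_self).aestronglyMeasurable measurableSet_Ioc)⟩
      have hAc : ContinuousWithinAt (fun t => t ^ β * φ t) (Set.Iic 1) 1 :=
        (hrpow_cont.continuousAt.continuousWithinAt).mul
          ((hφ 1 (by norm_num)).mono_of_mem_nhdsWithin hIccmem)
      have hA1 : HasDerivWithinAt A ((1:ℝ) ^ β * φ 1) (Set.Iic 1) 1 :=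
        intervalIntegral.integral_hasDerivWithinAt_right (hA_ii 1 (by norm_num)) hAm hAc
      have hDm : StronglyMeasurableAtFilter (fun t => t ^ β * lg β t * φ t)
          (nhdsWithin (1:ℝ) (Set.Iic 1)) volume := ⟨Set.Ioc 0 1, hIocmem, hfun_meas⟩
      have hDc : ContinuousWithinAt (fun t => t ^ β * lg β t * φ t) (Set.Iic 1) 1 :=
        ((hrpow_cont.continuousAt.mul
          (hasDerivAt_lg hβ one_pos).continuousAt).continuousWithinAt).mul
          ((hφ 1 (by norm_num)).mono_of_mem_nhdsWithin hIccmem)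
      have hD1 : HasDerivWithinAt D ((1:ℝ) ^ β * lg β 1 * φ 1) (Set.Iic 1) 1 :=
        intervalIntegral.integral_hasDerivWithinAt_right (hD_ii 1 (by norm_num)) hDm hDc
      have hg1 : HasDerivWithinAt (lg β) ((1:ℝ) ^ (-β)) (Set.Iic 1) 1 :=
        (hasDerivAt_lg hβ one_pos).hasDerivWithinAt
      have Hleft0 : HasDerivWithinAt (fun x => α + (lg β x * A x + (D 1 - D x)))
          ((1:ℝ) ^ (-β) * A 1) (Set.Iic 1) 1 := by
        have := ((hg1.mul hA1).add
          ((hasDerivWithinAt_const (1:ℝ) (Set.Iic 1) (D 1)).sub hD1)).const_add α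
        refine this.congr_deriv ?_
        rw [lg_one]
        ring
      have Hleft : HasDerivWithinAt (fun x => α + ∫ t in (0:ℝ)..1, t ^ β * laneEmdenG0 β x t * φ t)
          ((1:ℝ) ^ (-β) * A 1) (Set.Iic 1) 1 := by
        apply Hleft0.congr_of_eventuallyEq _ (by rw [key_eq 1 (by norm_num)])
        filter_upwards [hIocmem] with y hy
        rw [key_eq y hy]
      -- right side
      have key_eq2 : ∀ x ∈ Set.Ici (1:ℝ),
          (∫ t in (0:ℝ)..1, t ^ β * laneEmdenG0 β x t * φ t) = lg β x * A 1 := by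
        intro x hx
        have : Set.EqOn (fun t => t ^ β * laneEmdenG0 β x t * φ t)
            (fun t => lg β x * (t ^ β * φ t)) (Set.uIcc 0 1) := by
          rw [Set.uIcc_of_le (by norm_num : (0:ℝ) ≤ 1)]
          intro t ht
          simp only [laneEmdenG0_eq]
          split_ifs with h
          · rw [le_antisymm h (ht.2.trans hx)]; ring
          · ring
        rw [intervalIntegral.integral_congr this]
        exact intervalIntegral.integral_const_mul _ _
      have Hright : HasDerivWithinAt (fun x => α + ∫ t in (0:ℝ)..1, t ^ β * laneEmdenG0 β x t * φ t)
          ((1:ℝ) ^ (-β) * A 1) (Set.Ici 1) 1 := by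
        have H0 : HasDerivWithinAt (fun x => α + lg β x * A 1) ((1:ℝ) ^ (-β) * A 1) (Set.Ici 1) 1 :=
          (((hasDerivAt_lg hβ one_pos).hasDerivWithinAt).mul_const (A 1)).const_add α
        apply H0.congr_of_eventuallyEq _ (by rw [key_eq2 1 Set.self_mem_Ici])
        filter_upwards [self_mem_nhdsWithin] with y hy
        rw [key_eq2 y hy]
      have := Hleft.union Hright
      rw [Set.Iic_union_Ici, hasDerivWithinAt_univ] at this
      exact this
    · -- x₀ < 1
      have hx₀' : x₀ ∈ Set.Ioo (0:ℝ) 1 := ⟨hx₀.1, h1⟩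
      have hnb : Set.Ioo (0:ℝ) 1 ∈ nhds x₀ := Ioo_mem_nhds hx₀.1 h1
      have hφc : ContinuousAt φ x₀ := hφ.continuousAt (Icc_mem_nhds hx₀.1 h1)
      have hAm : StronglyMeasurableAtFilter (fun t => t ^ β * φ t) (nhds x₀) volume :=
        ⟨Set.Ioc 0 1, mem_of_superset hnb Set.Ioo_subset_Ioc_self,
          (hrpow_cont.aestronglyMeasurable).mul
          ((hφ.mono Set.Ioc_subset_Icc_self).aestronglyMeasurable measurableSet_Ioc)⟩
      have hAd : HasDerivAt A (x₀ ^ β * φ x₀) x₀ :=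
        intervalIntegral.integral_hasDerivAt_right (hA_ii x₀ ⟨hx₀.1.le, hx₀.2⟩) hAm
          (hrpow_cont.continuousAt.mul hφc)
      have hDm : StronglyMeasurableAtFilter (fun t => t ^ β * lg β t * φ t) (nhds x₀) volume :=
        ⟨Set.Ioc 0 1, mem_of_superset hnb Set.Ioo_subset_Ioc_self, hfun_meas⟩
      have hDd : HasDerivAt D (x₀ ^ β * lg β x₀ * φ x₀) x₀ :=
        intervalIntegral.integral_hasDerivAt_right (hD_ii x₀ ⟨hx₀.1.le, hx₀.2⟩) hDm
          ((hrpow_cont.continuousAt.mul (hasDerivAt_lg hβ hx₀.1).continuousAt).mul hφc)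
      have hgd : HasDerivAt (lg β) (x₀ ^ (-β)) x₀ := hasDerivAt_lg hβ hx₀.1
      have H0 : HasDerivAt (fun x => α + (lg β x * A x + (D 1 - D x)))
          (x₀ ^ (-β) * A x₀) x₀ := by
        have := ((hgd.mul hAd).add ((hasDerivAt_const x₀ (D 1)).sub hDd)).const_add α
        refine this.congr_deriv ?_
        ring
      apply H0.congr_of_eventuallyEq
      filter_upwards [hnb] with y hy
      rw [key_eq y (Set.Ioo_subset_Ioc_self hy)]
  -- final bound
  intro x₀ hx₀
  rw [(hderiv x₀ hx₀).deriv]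
  have hAbound : |A x₀| ≤ M * (x₀ ^ (β + 1) / (β + 1)) := by
    have hb2 : IntervalIntegrable (fun t => M * t ^ β) volume 0 x₀ :=
      (hrpow_cont.intervalIntegrable _ _).const_mul M
    have := intervalIntegral.norm_integral_le_abs_of_norm_le (μ := volume)
      (f := fun t => t ^ β * φ t) (g := fun t => M * t ^ β) (a := 0) (b := x₀) ?_ hb2
    · rw [intervalIntegral.integral_const_mul, integral_rpow (Or.inl (by linarith)),
        Real.zero_rpow (by linarith)] at this
      calc |A x₀| ≤ |M * ((x₀ ^ (β + 1) - 0) / (β + 1))| := this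
        _ = M * (x₀ ^ (β + 1) / (β + 1)) := by
            rw [sub_zero, abs_of_nonneg]
            exact mul_nonneg hM0 (div_nonneg (Real.rpow_nonneg hx₀.1.le _) hβ1.le)
    · rw [Set.uIoc_of_le hx₀.1.le]
      filter_upwards [ae_restrict_mem measurableSet_Ioc] with t ht
      rw [Real.norm_eq_abs, abs_mul, abs_of_nonneg (Real.rpow_nonneg ht.1.le β)]
      calc t ^ β * |φ t| ≤ t ^ β * M :=
            mul_le_mul_of_nonneg_left (hM t ⟨ht.1.le, ht.2.trans hx₀.2⟩)
              (Real.rpow_nonneg ht.1.le β)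
        _ = M * t ^ β := by ring
  have hxx : x₀ ^ (-β) * x₀ ^ (β + 1) = x₀ := by
    rw [← Real.rpow_add hx₀.1]
    norm_num
  calc |x₀ ^ (-β) * A x₀| = x₀ ^ (-β) * |A x₀| := by
        rw [abs_mul, abs_of_nonneg (Real.rpow_nonneg hx₀.1.le _)]
    _ ≤ x₀ ^ (-β) * (M * (x₀ ^ (β + 1) / (β + 1))) :=
        mul_le_mul_of_nonneg_left hAbound (Real.rpow_nonneg hx₀.1.le _)
    _ = M * x₀ / (β + 1) := by
        rw [show x₀ ^ (-β) * (M * (x₀ ^ (β + 1) / (β + 1))) =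
          M * (x₀ ^ (-β) * x₀ ^ (β + 1)) / (β + 1) by ring, hxx]
    _ ≤ M / (β + 1) := by
        rw [div_le_div_iff_of_pos_right hβ1]
        nlinarith [hx₀.2, hM0]
end

section
/- Suppose f is continuous, |f(x,u)| ≤ M on D_M, and f is L-Lipschitz in u on D_M. Define the operator A on C[0,1] by (Aφ)(x) = f(x, u_φ(x)) where u_φ(x) = α + ∫₀¹ t^β G₀(x,t) φ(t) dt. Then A maps the closed ball B(0,M) = {φ ∈ C[0,1] : ‖φ‖_∞ ≤ M} into itself, and for any φ₁, φ₂ ∈ B(0,M) one has ‖Aφ₂ − Aφ₁‖_∞ ≤ q·‖φ₂ − φ₁‖_∞ with q = L/(2(β+1)). -/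
open Set MeasureTheory intervalIntegral

/-- one-variable profile of the Green function -/
noncomputable def leG1 (β t : ℝ) : ℝ :=
  if β = 1 then Real.log t else (t ^ (1 - β) - 1) / (1 - β)

/-- nonnegative dominating function `t^β * (-leG1 β t)` -/
noncomputable def leTau (β t : ℝ) : ℝ :=
  if β = 1 then -(t * Real.log t) else (t - t ^ β) / (β - 1)

lemma laneEmdenG0_eq_max (β x t : ℝ) : laneEmdenG0 β x t = leG1 β (max x t) := by
  rcases le_total x t with h | h
  · simp [laneEmdenG0, leG1, max_eq_right h, h]
  · rcases eq_or_lt_of_le h with h' | h'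
    · subst h'
      simp [laneEmdenG0, leG1]
    · simp [laneEmdenG0, leG1, max_eq_left h, not_le.mpr h']

lemma leG1_mono {β : ℝ} (hβ : 1 ≤ β) {s t : ℝ} (hs : 0 < s) (hst : s ≤ t) :
    leG1 β s ≤ leG1 β t := by
  unfold leG1
  split_ifs with hb
  · exact Real.log_le_log hs hst
  · have hb' : 1 < β := lt_of_le_of_ne hβ (Ne.symm hb)
    rw [div_le_div_right_of_neg (by linarith : 1 - β < 0)]
    have := Real.rpow_le_rpow_of_nonpos hs hst (by linarith : 1 - β ≤ 0)
    linarith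

lemma leG1_one {β : ℝ} : leG1 β 1 = 0 := by
  unfold leG1; split_ifs <;> simp

lemma leG1_nonpos {β : ℝ} (hβ : 1 ≤ β) {t : ℝ} (ht : 0 < t) (ht1 : t ≤ 1) :
    leG1 β t ≤ 0 :=
  le_trans (leG1_mono hβ ht ht1) (le_of_eq leG1_one)

lemma leTau_zero {β : ℝ} (hβ : 1 ≤ β) : leTau β 0 = 0 := by
  unfold leTau; split_ifs with hb
  · simp
  · rw [Real.zero_rpow (by linarith : β ≠ 0)]; simp

lemma rpow_mul_leG1 {β : ℝ} (hβ : 1 ≤ β) {t : ℝ} (ht : 0 < t) :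
    t ^ β * leG1 β t = -leTau β t := by
  unfold leG1 leTau
  split_ifs with hb
  · rw [hb, Real.rpow_one]; ring
  · have hb' : 1 < β := lt_of_le_of_ne hβ (Ne.symm hb)
    have h1 : t ^ β * t ^ (1 - β) = t := by
      rw [← Real.rpow_add ht, show β + (1 - β) = 1 by ring, Real.rpow_one]
    rw [← mul_div_assoc, mul_sub, h1, mul_one]
    rw [show (1 - β) = -(β - 1) by ring, div_neg]

lemma rpow_mul_leG1' {β : ℝ} (hβ : 1 ≤ β) {t : ℝ} (ht : 0 ≤ t) :
    t ^ β * leG1 β t = -leTau β t := by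
  rcases ht.eq_or_lt with h | h
  · rw [← h, Real.zero_rpow (by linarith : β ≠ 0), zero_mul, leTau_zero hβ, neg_zero]
  · exact rpow_mul_leG1 hβ h

lemma leTau_nonneg {β : ℝ} (hβ : 1 ≤ β) {t : ℝ} (ht : t ∈ Icc (0:ℝ) 1) :
    0 ≤ leTau β t := by
  unfold leTau
  split_ifs with hb
  · nlinarith [Real.log_nonpos ht.1 ht.2, ht.1]
  · have hb' : 1 < β := lt_of_le_of_ne hβ (Ne.symm hb)
    apply div_nonneg _ (by linarith)
    rcases ht.1.eq_or_lt with h | h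
    · rw [← h, Real.zero_rpow (by linarith : β ≠ 0)]; norm_num
    · have := Real.rpow_le_rpow_of_exponent_ge h ht.2 hβ
      rw [Real.rpow_one] at this
      linarith

lemma leTau_continuous {β : ℝ} (hβ : 1 ≤ β) : Continuous (leTau β) := by
  unfold leTau
  split_ifs with hb
  · exact Real.continuous_mul_log.neg
  · exact (continuous_id.sub (Real.continuous_rpow_const (by linarith))).div_const _

lemma integral_leTau {β : ℝ} (hβ : 1 ≤ β) :
    ∫ t in (0:ℝ)..1, leTau β t = 1 / (2 * (β + 1)) := by
  by_cases hb : β = 1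
  · subst hb
    simp only [leTau, eq_self_iff_true, if_true]
    have key : ∫ t in (0:ℝ)..1, t * Real.log t = -(1/4) := by
      set F : ℝ → ℝ := fun t => t * (t * Real.log t) / 2 - t ^ 2 / 4 with hF
      have hFG : F = fun t => t ^ 2 * Real.log t / 2 - t ^ 2 / 4 :=
        funext fun t => by simp only [hF]; ring
      have hFc : ContinuousOn F (Icc 0 1) :=
        (((continuous_id.mul Real.continuous_mul_log).div_const 2).sub
          ((continuous_pow 2).div_const 4)).continuousOn
      have hFd : ∀ t ∈ Ioo (0:ℝ) 1, HasDerivAt F (t * Real.log t) t := by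
        intro t ht
        rw [hFG]
        have h1 : HasDerivAt (fun t : ℝ => t ^ 2 * Real.log t)
            ((2:ℕ) * t ^ 1 * Real.log t + t ^ 2 * t⁻¹) t :=
          (hasDerivAt_pow 2 t).mul (Real.hasDerivAt_log ht.1.ne')
        have h2 := (h1.div_const 2).sub ((hasDerivAt_pow 2 t).div_const 4)
        refine h2.congr_deriv ?_
        have ht' : t ≠ 0 := ht.1.ne'
        have h3 : t ^ 2 * t⁻¹ = t := by rw [pow_two, mul_assoc, mul_inv_cancel₀ ht', mul_one]
        rw [h3]
        norm_num
        ring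
      have hint : IntervalIntegrable (fun t : ℝ => t * Real.log t) volume 0 1 :=
        Real.continuous_mul_log.intervalIntegrable 0 1
      have := integral_eq_sub_of_hasDerivAt_of_le (by norm_num) hFc hFd hint
      rw [this]
      simp [hF]
    rw [intervalIntegral.integral_neg, key]
    norm_num
  · have hb' : 1 < β := lt_of_le_of_ne hβ (Ne.symm hb)
    simp only [leTau, if_neg hb]
    have h1 : IntervalIntegrable (fun t : ℝ => t ^ β) volume 0 1 :=
      (Real.continuous_rpow_const (by linarith)).intervalIntegrable 0 1
    have h2 : ∫ t in (0:ℝ)..1, (t - t ^ β) = 1/2 - 1/(β+1) := by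
      rw [intervalIntegral.integral_sub intervalIntegrable_id h1, integral_id,
        integral_rpow (Or.inl (by linarith : (-1:ℝ) < β))]
      rw [Real.one_rpow, Real.zero_rpow (by linarith : β + 1 ≠ 0)]
      norm_num
    rw [intervalIntegral.integral_div, h2]
    have hβ1 : β + 1 ≠ 0 := by linarith
    have hβ2 : β - 1 ≠ 0 := by intro h; apply hb; linarith
    field_simp
    ring

lemma kernel_abs_le {β : ℝ} (hβ : 1 ≤ β) {x t : ℝ} (hx : x ∈ Icc (0:ℝ) 1)
    (ht : t ∈ Icc (0:ℝ) 1) : |t ^ β * laneEmdenG0 β x t| ≤ leTau β t := by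
  rcases ht.1.eq_or_lt with h0 | h0
  · rw [← h0, Real.zero_rpow (by linarith : β ≠ 0), zero_mul, abs_zero, leTau_zero hβ]
  · rw [laneEmdenG0_eq_max]
    have hmax0 : 0 < max x t := lt_max_of_lt_right h0
    have hmax1 : max x t ≤ 1 := max_le hx.2 ht.2
    have hg : leG1 β (max x t) ≤ 0 := leG1_nonpos hβ hmax0 hmax1
    have htβ : 0 ≤ t ^ β := Real.rpow_nonneg ht.1 β
    rw [abs_mul, abs_of_nonneg htβ, abs_of_nonpos hg]
    have h1 : -leG1 β (max x t) ≤ -leG1 β t :=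
      neg_le_neg (leG1_mono hβ h0 (le_max_right x t))
    calc t ^ β * -leG1 β (max x t) ≤ t ^ β * -leG1 β t :=
          mul_le_mul_of_nonneg_left h1 htβ
      _ = leTau β t := by rw [mul_neg, rpow_mul_leG1 hβ h0, neg_neg]

lemma leG1_contAt {β x : ℝ} (hx : 0 < x) : ContinuousAt (leG1 β) x := by
  unfold leG1
  split_ifs with hb
  · exact Real.continuousAt_log hx.ne'
  · exact ((Real.continuousAt_rpow_const _ _ (Or.inl hx.ne')).sub continuousAt_const).div_const _

lemma kernel_contOn {β : ℝ} (hβ : 1 ≤ β) {x : ℝ} (hx : x ∈ Icc (0:ℝ) 1)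
    {φ : ℝ → ℝ} (hφ : ContinuousOn φ (Icc 0 1)) :
    ContinuousOn (fun t => t ^ β * laneEmdenG0 β x t * φ t) (Icc (0:ℝ) 1) := by
  simp only [laneEmdenG0_eq_max]
  rcases hx.1.eq_or_lt with h0 | h0
  · have heq : EqOn (fun t => t ^ β * leG1 β (max x t) * φ t)
        (fun t => -leTau β t * φ t) (Icc (0:ℝ) 1) := by
      intro t ht
      simp only
      rw [← h0, max_eq_right ht.1, rpow_mul_leG1' hβ ht.1]
    exact (((leTau_continuous hβ).neg.continuousOn).mul hφ).congr heq
  · have hg : ContinuousOn (fun t => leG1 β (max x t)) (Icc (0:ℝ) 1) := by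
      intro t _
      apply ContinuousAt.continuousWithinAt
      have hmt : 0 < max x t := lt_of_lt_of_le h0 (le_max_left _ _)
      exact (leG1_contAt hmt).comp ((continuous_const.max continuous_id).continuousAt)
    exact (((Real.continuous_rpow_const (by linarith)).continuousOn.mul hg).mul hφ)

lemma key_estimate {β : ℝ} (hβ : 1 ≤ β) {x : ℝ} (hx : x ∈ Icc (0:ℝ) 1)
    {φ : ℝ → ℝ} (hφ : ContinuousOn φ (Icc 0 1)) {C : ℝ}
    (hC : ∀ t ∈ Icc (0:ℝ) 1, |φ t| ≤ C) :
    |∫ t in (0:ℝ)..1, t ^ β * laneEmdenG0 β x t * φ t| ≤ C / (2 * (β + 1)) := by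
  have hC0 : 0 ≤ C := le_trans (abs_nonneg _) (hC 0 ⟨le_refl _, by norm_num⟩)
  have hk := kernel_contOn hβ hx hφ
  have hki : IntervalIntegrable (fun t => t ^ β * laneEmdenG0 β x t * φ t) volume 0 1 := by
    apply ContinuousOn.intervalIntegrable
    rwa [uIcc_of_le (by norm_num : (0:ℝ) ≤ 1)]
  calc |∫ t in (0:ℝ)..1, t ^ β * laneEmdenG0 β x t * φ t|
      ≤ ∫ t in (0:ℝ)..1, |t ^ β * laneEmdenG0 β x t * φ t| :=
        intervalIntegral.abs_integral_le_integral_abs (by norm_num)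
    _ ≤ ∫ t in (0:ℝ)..1, C * leTau β t := by
        apply intervalIntegral.integral_mono_on (by norm_num) hki.abs
          ((continuous_const.mul (leTau_continuous hβ)).intervalIntegrable 0 1)
        intro t ht
        rw [abs_mul]
        calc |t ^ β * laneEmdenG0 β x t| * |φ t| ≤ leTau β t * C :=
              mul_le_mul (kernel_abs_le hβ hx ht) (hC t ht) (abs_nonneg _)
                (leTau_nonneg hβ ht)
          _ = C * leTau β t := by ring
    _ = C * (1 / (2 * (β + 1))) := by
        rw [intervalIntegral.integral_const_mul, integral_leTau hβ]
    _ = C / (2 * (β + 1)) := by ring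

lemma I_contOn {β : ℝ} (hβ : 1 ≤ β) {φ : ℝ → ℝ} (hφ : ContinuousOn φ (Icc 0 1))
    {C : ℝ} (hC : ∀ t ∈ Icc (0:ℝ) 1, |φ t| ≤ C) :
    ContinuousOn (fun x => ∫ t in (0:ℝ)..1, t ^ β * laneEmdenG0 β x t * φ t)
      (Icc (0:ℝ) 1) := by
  have hC0 : 0 ≤ C := le_trans (abs_nonneg _) (hC 0 ⟨le_refl _, by norm_num⟩)
  set ψ : ℝ → ℝ := fun t => -leTau β t * φ t with hψ
  set P : ℝ → ℝ := fun x => ∫ t in (0:ℝ)..x, t ^ β * φ t with hP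
  have htβφ : ContinuousOn (fun t : ℝ => t ^ β * φ t) (Icc 0 1) :=
    (Real.continuous_rpow_const (by linarith)).continuousOn.mul hφ
  have hψc : ContinuousOn ψ (Icc 0 1) := ((leTau_continuous hβ).neg.continuousOn).mul hφ
  have hsplit : ∀ x ∈ Icc (0:ℝ) 1,
      (∫ t in (0:ℝ)..1, t ^ β * laneEmdenG0 β x t * φ t)
        = leG1 β x * P x + ∫ t in x..(1:ℝ), ψ t := by
    intro x hx
    have hk := kernel_contOn hβ hx hφ
    have h1 : IntervalIntegrable (fun t => t ^ β * laneEmdenG0 β x t * φ t) volume 0 x := by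
      apply ContinuousOn.intervalIntegrable
      rw [uIcc_of_le hx.1]
      exact hk.mono (Icc_subset_Icc le_rfl hx.2)
    have h2 : IntervalIntegrable (fun t => t ^ β * laneEmdenG0 β x t * φ t) volume x 1 := by
      apply ContinuousOn.intervalIntegrable
      rw [uIcc_of_le hx.2]
      exact hk.mono (Icc_subset_Icc hx.1 le_rfl)
    rw [← intervalIntegral.integral_add_adjacent_intervals h1 h2]
    congr 1
    · rw [← intervalIntegral.integral_const_mul]
      apply intervalIntegral.integral_congr
      intro t ht
      rw [uIcc_of_le hx.1] at ht
      simp only [laneEmdenG0_eq_max, max_eq_left ht.2]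
      ring
    · apply intervalIntegral.integral_congr
      intro t ht
      rw [uIcc_of_le hx.2] at ht
      simp only [laneEmdenG0_eq_max, max_eq_right ht.1, hψ]
      rw [rpow_mul_leG1' hβ (le_trans hx.1 ht.1)]
  refine ContinuousOn.congr ?_ hsplit
  apply ContinuousOn.add
  · -- continuity of x ↦ leG1 β x * P x
    have hP : ContinuousOn P (Icc (0:ℝ) 1) := by
      have h := intervalIntegral.continuousOn_primitive_interval
        (f := fun t : ℝ => t ^ β * φ t) (μ := volume) (a := 0) (b := 1) ?_
      · rwa [uIcc_of_le (by norm_num : (0:ℝ) ≤ 1)] at h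
      · rw [uIcc_of_le (by norm_num : (0:ℝ) ≤ 1)]
        exact htβφ.integrableOn_Icc
    intro x hx
    rcases hx.1.eq_or_lt with h0 | h0
    · -- squeeze at 0
      have hbound : ∀ y ∈ Icc (0:ℝ) 1,
          |leG1 β y * P y| ≤ (C / (β + 1)) * (y * leTau β y) := by
        intro y hy
        rcases hy.1.eq_or_lt with h | h
        · rw [← h]
          rw [show P 0 = 0 from intervalIntegral.integral_same, mul_zero, abs_zero,
            zero_mul, mul_zero]
        · have hPy : |P y| ≤ C * (y ^ (β + 1) / (β + 1)) := by
            have hiy : IntervalIntegrable (fun t : ℝ => t ^ β * φ t) volume 0 y := by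
              apply ContinuousOn.intervalIntegrable
              rw [uIcc_of_le hy.1]
              exact htβφ.mono (Icc_subset_Icc le_rfl hy.2)
            calc |P y| ≤ ∫ t in (0:ℝ)..y, |t ^ β * φ t| :=
                  intervalIntegral.abs_integral_le_integral_abs hy.1
              _ ≤ ∫ t in (0:ℝ)..y, C * t ^ β := by
                  apply intervalIntegral.integral_mono_on hy.1 hiy.abs
                    ((continuous_const.mul (Real.continuous_rpow_const (by linarith))).intervalIntegrable 0 y)
                  intro t ht
                  have ht1 : t ∈ Icc (0:ℝ) 1 := ⟨ht.1, le_trans ht.2 hy.2⟩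
                  rw [abs_mul, abs_of_nonneg (Real.rpow_nonneg ht.1 β)]
                  calc t ^ β * |φ t| ≤ t ^ β * C :=
                        mul_le_mul_of_nonneg_left (hC t ht1) (Real.rpow_nonneg ht.1 β)
                    _ = C * t ^ β := by ring
              _ = C * (y ^ (β + 1) / (β + 1)) := by
                  rw [intervalIntegral.integral_const_mul,
                    integral_rpow (Or.inl (by linarith : (-1:ℝ) < β)),
                    Real.zero_rpow (by linarith : β + 1 ≠ 0)]
                  ring
          have hg1 : |leG1 β y| = -leG1 β y := abs_of_nonpos (leG1_nonpos hβ h hy.2)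
          have hgn : 0 ≤ -leG1 β y := neg_nonneg.mpr (leG1_nonpos hβ h hy.2)
          have hrw : y ^ (β + 1) * -leG1 β y = y * leTau β y := by
            rw [Real.rpow_add h, Real.rpow_one, mul_comm (y ^ β) y, mul_assoc,
              mul_neg, rpow_mul_leG1 hβ h, neg_neg]
          calc |leG1 β y * P y| = -leG1 β y * |P y| := by rw [abs_mul, hg1]
            _ ≤ -leG1 β y * (C * (y ^ (β + 1) / (β + 1))) :=
                mul_le_mul_of_nonneg_left hPy hgn
            _ = (C / (β + 1)) * (y ^ (β + 1) * -leG1 β y) := by ring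
            _ = (C / (β + 1)) * (y * leTau β y) := by rw [hrw]
      have hlim : Filter.Tendsto (fun y => (C / (β + 1)) * (y * leTau β y))
          (nhdsWithin 0 (Icc (0:ℝ) 1)) (nhds 0) := by
        have hcont : Continuous fun y => (C / (β + 1)) * (y * leTau β y) :=
          continuous_const.mul (continuous_id.mul (leTau_continuous hβ))
        have h2 := (hcont.tendsto 0).mono_left
          (nhdsWithin_le_nhds (s := Icc (0:ℝ) 1))
        simpa [leTau_zero hβ] using h2
      have hT : Filter.Tendsto (fun y => leG1 β y * P y)
          (nhdsWithin 0 (Icc (0:ℝ) 1)) (nhds 0) := by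
        apply squeeze_zero_norm' ?_ hlim
        filter_upwards [eventually_mem_nhdsWithin] with y hy
        rw [Real.norm_eq_abs]
        exact hbound y hy
      rw [← h0]
      unfold ContinuousWithinAt
      have hv : (fun x => leG1 β x * P x) 0 = 0 := by
        show leG1 β 0 * P 0 = 0
        rw [show P 0 = 0 from intervalIntegral.integral_same, mul_zero]
      rw [hv]
      exact hT
    · exact ((leG1_contAt h0).continuousWithinAt).mul (hP x hx)
  · have h := intervalIntegral.continuousOn_primitive_interval_left
      (f := ψ) (μ := volume) (a := 0) (b := 1) ?_
    · rwa [uIcc_of_le (by norm_num : (0:ℝ) ≤ 1)] at h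
    · rw [uIcc_of_le (by norm_num : (0:ℝ) ≤ 1)]
      exact hψc.integrableOn_Icc
/-- The nonlinear operator `A` : `(Aφ)(x) = f(x, u_φ(x))` where
`u_φ(x) = α + ∫₀¹ t^β G₀(x,t) φ(t) dt`. -/
noncomputable def laneEmdenA (β α : ℝ) (f : ℝ → ℝ → ℝ) (φ : ℝ → ℝ) (x : ℝ) : ℝ :=
  f x (α + ∫ t in (0:ℝ)..1, t ^ β * laneEmdenG0 β x t * φ t)

/-- The operator `A` maps the ball `B(0,M) ⊆ C[0,1]` into itself and is a
contraction there with coefficient `q = L/(2(β+1))`. -/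
theorem laneEmdenA_selfmap_contraction
    (β α M L : ℝ) (f : ℝ → ℝ → ℝ)
    (hβ : 1 ≤ β) (hM : 0 < M) (hL : 0 ≤ L)
    (hcont : ContinuousOn (fun p : ℝ × ℝ => f p.1 p.2)
      {p : ℝ × ℝ | p.1 ∈ Set.Icc (0:ℝ) 1 ∧ |p.2| ≤ |α| + M / (2 * (β + 1))})
    (hbound : ∀ x u : ℝ, x ∈ Set.Icc (0:ℝ) 1 → |u| ≤ |α| + M / (2 * (β + 1)) →
      |f x u| ≤ M)
    (hlip : ∀ x u₁ u₂ : ℝ, x ∈ Set.Icc (0:ℝ) 1 → |u₁| ≤ |α| + M / (2 * (β + 1)) →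
      |u₂| ≤ |α| + M / (2 * (β + 1)) → |f x u₂ - f x u₁| ≤ L * |u₂ - u₁|) :
    (∀ φ : ℝ → ℝ, ContinuousOn φ (Set.Icc 0 1) →
      (∀ x ∈ Set.Icc (0:ℝ) 1, |φ x| ≤ M) →
        ContinuousOn (laneEmdenA β α f φ) (Set.Icc 0 1) ∧
        ∀ x ∈ Set.Icc (0:ℝ) 1, |laneEmdenA β α f φ x| ≤ M) ∧
    (∀ φ₁ φ₂ : ℝ → ℝ, ContinuousOn φ₁ (Set.Icc 0 1) →
      (∀ x ∈ Set.Icc (0:ℝ) 1, |φ₁ x| ≤ M) →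
      ContinuousOn φ₂ (Set.Icc 0 1) →
      (∀ x ∈ Set.Icc (0:ℝ) 1, |φ₂ x| ≤ M) →
      ∀ x ∈ Set.Icc (0:ℝ) 1,
        |laneEmdenA β α f φ₂ x - laneEmdenA β α f φ₁ x| ≤
          (L / (2 * (β + 1))) * (⨆ t ∈ Set.Icc (0:ℝ) 1, |φ₂ t - φ₁ t|)) := by
  constructor
  · intro φ hφc hφM
    have hu : ∀ x ∈ Icc (0:ℝ) 1,
        |α + ∫ t in (0:ℝ)..1, t ^ β * laneEmdenG0 β x t * φ t|
          ≤ |α| + M / (2 * (β + 1)) := by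
      intro x hx
      exact (abs_add_le _ _).trans (add_le_add le_rfl (key_estimate hβ hx hφc hφM))
    constructor
    · have hucont : ContinuousOn
          (fun x => α + ∫ t in (0:ℝ)..1, t ^ β * laneEmdenG0 β x t * φ t)
          (Icc (0:ℝ) 1) := continuousOn_const.add (I_contOn hβ hφc hφM)
      have hmap : Set.MapsTo
          (fun x => (x, α + ∫ t in (0:ℝ)..1, t ^ β * laneEmdenG0 β x t * φ t))
          (Icc (0:ℝ) 1)
          {p : ℝ × ℝ | p.1 ∈ Set.Icc (0:ℝ) 1 ∧ |p.2| ≤ |α| + M / (2 * (β + 1))} :=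
        fun x hx => ⟨hx, hu x hx⟩
      exact hcont.comp (continuousOn_id.prodMk hucont) hmap
    · intro x hx
      exact hbound x _ hx (hu x hx)
  · intro φ₁ φ₂ h1c h1M h2c h2M x hx
    set S := ⨆ t ∈ Icc (0:ℝ) 1, |φ₂ t - φ₁ t| with hS
    have hbdd : BddAbove (Set.range fun t => ⨆ _ : t ∈ Icc (0:ℝ) 1, |φ₂ t - φ₁ t|) := by
      refine ⟨2 * M, ?_⟩
      rintro _ ⟨t, rfl⟩
      refine Real.iSup_le (fun ht => ?_) (by linarith)
      calc |φ₂ t - φ₁ t| ≤ |φ₂ t| + |φ₁ t| := abs_sub _ _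
        _ ≤ M + M := add_le_add (h2M t ht) (h1M t ht)
        _ = 2 * M := by ring
    have hle : ∀ t ∈ Icc (0:ℝ) 1, |φ₂ t - φ₁ t| ≤ S := by
      intro t ht
      have h1 : |φ₂ t - φ₁ t| = ⨆ _ : t ∈ Icc (0:ℝ) 1, |φ₂ t - φ₁ t| :=
        (ciSup_pos (f := fun _ => |φ₂ t - φ₁ t|) ht).symm
      rw [hS, h1]
      exact le_ciSup hbdd t
    have hu1 : |α + ∫ t in (0:ℝ)..1, t ^ β * laneEmdenG0 β x t * φ₁ t|
        ≤ |α| + M / (2 * (β + 1)) :=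
      (abs_add_le _ _).trans (add_le_add le_rfl (key_estimate hβ hx h1c h1M))
    have hu2 : |α + ∫ t in (0:ℝ)..1, t ^ β * laneEmdenG0 β x t * φ₂ t|
        ≤ |α| + M / (2 * (β + 1)) :=
      (abs_add_le _ _).trans (add_le_add le_rfl (key_estimate hβ hx h2c h2M))
    have hki1 : IntervalIntegrable (fun t => t ^ β * laneEmdenG0 β x t * φ₁ t) volume 0 1 := by
      apply ContinuousOn.intervalIntegrable
      rw [uIcc_of_le (by norm_num : (0:ℝ) ≤ 1)]
      exact kernel_contOn hβ hx h1c
    have hki2 : IntervalIntegrable (fun t => t ^ β * laneEmdenG0 β x t * φ₂ t) volume 0 1 := by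
      apply ContinuousOn.intervalIntegrable
      rw [uIcc_of_le (by norm_num : (0:ℝ) ≤ 1)]
      exact kernel_contOn hβ hx h2c
    have hdiff : (∫ t in (0:ℝ)..1, t ^ β * laneEmdenG0 β x t * φ₂ t)
        - (∫ t in (0:ℝ)..1, t ^ β * laneEmdenG0 β x t * φ₁ t)
        = ∫ t in (0:ℝ)..1, t ^ β * laneEmdenG0 β x t * (φ₂ t - φ₁ t) := by
      rw [← intervalIntegral.integral_sub hki2 hki1]
      apply intervalIntegral.integral_congr
      intro t _
      ring
    have hkey : |∫ t in (0:ℝ)..1, t ^ β * laneEmdenG0 β x t * (φ₂ t - φ₁ t)|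
        ≤ S / (2 * (β + 1)) :=
      key_estimate hβ hx (h2c.sub h1c) hle
    calc |laneEmdenA β α f φ₂ x - laneEmdenA β α f φ₁ x|
        ≤ L * |(α + ∫ t in (0:ℝ)..1, t ^ β * laneEmdenG0 β x t * φ₂ t)
            - (α + ∫ t in (0:ℝ)..1, t ^ β * laneEmdenG0 β x t * φ₁ t)| :=
          hlip x _ _ hx hu1 hu2
      _ = L * |∫ t in (0:ℝ)..1, t ^ β * laneEmdenG0 β x t * (φ₂ t - φ₁ t)| := by
          rw [show (α + ∫ t in (0:ℝ)..1, t ^ β * laneEmdenG0 β x t * φ₂ t)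
              - (α + ∫ t in (0:ℝ)..1, t ^ β * laneEmdenG0 β x t * φ₁ t)
              = (∫ t in (0:ℝ)..1, t ^ β * laneEmdenG0 β x t * φ₂ t)
              - (∫ t in (0:ℝ)..1, t ^ β * laneEmdenG0 β x t * φ₁ t) by ring, hdiff]
      _ ≤ L * (S / (2 * (β + 1))) := mul_le_mul_of_nonneg_left hkey hL
      _ = (L / (2 * (β + 1))) * S := by ring
end

section
/- Let r, s be positive integers with r > s, and let f(x,u) be continuous. If u is twice continuously differentiable on (0,1] and satisfies u''(x) + ((r/s)/x)·u'(x) = f(x, u(x)) for 0 < x ≤ 1 with u'(0) = 0 and u(1) = α, then the function v(y) = u(y^s) satisfies v''(y) + ((r−s+1)/y)·v'(y) = s²·y^{2s−2}·f(y^s, v(y)) for 0 < y ≤ 1 with v'(0) = 0 and v(1) = α. In particular, the Lane–Emden problem with rational parameter β = r/s is reduced to a Lane–Emden problem with integer parameter n = r − s + 1 > 1. -/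
/-- The substitution `y = x^{1/s}`, `v(y) = u(y^s)` transforms the Lane–Emden
problem with rational parameter `β = r/s` (`r > s ≥ 1`) into a Lane–Emden
problem with integer parameter `n = r − s + 1 > 1`:
`v'' + ((r−s+1)/y) v' = s² y^{2s−2} f(y^s, v(y))`, `v'(0) = 0`, `v(1) = α`. -/
theorem laneEmden_rational_to_integer
    (r s : ℕ) (hs : 0 < s) (hrs : s < r) (α : ℝ) (f : ℝ → ℝ → ℝ)
    (hf : Continuous (fun p : ℝ × ℝ => f p.1 p.2))
    (u u' u'' : ℝ → ℝ)
    (hu' : ∀ x ∈ Set.Ioc (0:ℝ) 1, HasDerivAt u (u' x) x)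
    (hu'' : ∀ x ∈ Set.Ioc (0:ℝ) 1, HasDerivAt u' (u'' x) x)
    (hu''cont : ContinuousOn u'' (Set.Ioc 0 1))
    (hode : ∀ x ∈ Set.Ioc (0:ℝ) 1,
      u'' x + (((r:ℝ) / (s:ℝ)) / x) * u' x = f x (u x))
    (hbc0 : Filter.Tendsto u' (nhdsWithin 0 (Set.Ioi 0)) (nhds 0))
    (hbc1 : u 1 = α) :
    ∃ v' v'' : ℝ → ℝ,
      (∀ y ∈ Set.Ioc (0:ℝ) 1, HasDerivAt (fun y : ℝ => u (y ^ s)) (v' y) y) ∧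
      (∀ y ∈ Set.Ioc (0:ℝ) 1, HasDerivAt v' (v'' y) y) ∧
      (∀ y ∈ Set.Ioc (0:ℝ) 1,
        v'' y + (((r:ℝ) - (s:ℝ) + 1) / y) * v' y =
          (s:ℝ) ^ 2 * y ^ (2 * s - 2) * f (y ^ s) (u (y ^ s))) ∧
      Filter.Tendsto v' (nhdsWithin 0 (Set.Ioi 0)) (nhds 0) ∧
      u ((1:ℝ) ^ s) = α := by
  have hmem : ∀ y ∈ Set.Ioc (0:ℝ) 1, y ^ s ∈ Set.Ioc (0:ℝ) 1 := by
    intro y hy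
    exact ⟨pow_pos hy.1 s, pow_le_one₀ hy.1.le hy.2⟩
  refine ⟨fun y => u' (y ^ s) * ((s:ℝ) * y ^ (s-1)),
    fun y => u'' (y ^ s) * ((s:ℝ) * y ^ (s-1)) ^ 2
      + u' (y ^ s) * ((s:ℝ) * (((s-1:ℕ):ℝ) * y ^ (s-1-1))), ?_, ?_, ?_, ?_, by simpa using hbc1⟩
  · intro y hy
    exact (hu' _ (hmem y hy)).comp y (hasDerivAt_pow s y)
  · intro y hy
    have h1 : HasDerivAt (fun y : ℝ => u' (y ^ s)) (u'' (y ^ s) * ((s:ℝ) * y ^ (s-1))) y :=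
      (hu'' _ (hmem y hy)).comp y (hasDerivAt_pow s y)
    have h2 : HasDerivAt (fun y : ℝ => (s:ℝ) * y ^ (s-1))
        ((s:ℝ) * (((s-1:ℕ):ℝ) * y ^ (s-1-1))) y :=
      (hasDerivAt_pow (s-1) y).const_mul _
    have : HasDerivAt (fun y : ℝ => u' (y ^ s) * ((s:ℝ) * y ^ (s-1))) _ y := h1.mul h2
    convert this using 1
    ring
  · intro y hy
    have hy0 : (0:ℝ) < y := hy.1
    have h := (hode _ (hmem y hy)).symm
    rw [h]
    obtain ⟨t, rfl⟩ : ∃ t, s = t + 1 := ⟨s - 1, (Nat.succ_pred_eq_of_pos hs).symm⟩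
    have hne : y ≠ 0 := hy0.ne'
    have hne' : y ^ (t+1) ≠ 0 := pow_ne_zero _ hne
    simp only [Nat.add_sub_cancel, show 2*(t+1)-2 = 2*t by omega]
    rcases t with _ | k
    · push_cast
      field_simp
      ring
    · simp only [Nat.add_sub_cancel]
      push_cast
      field_simp
      ring
  · have h2 : Filter.Tendsto (fun y : ℝ => y ^ s) (nhdsWithin 0 (Set.Ioi 0))
        (nhdsWithin 0 (Set.Ioi 0)) := by
      rw [tendsto_nhdsWithin_iff]
      constructor
      · have := (continuous_pow s (M := ℝ)).tendsto 0
        simpa [zero_pow hs.ne'] using this.mono_left nhdsWithin_le_nhds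
      · filter_upwards [self_mem_nhdsWithin] with y hy
        exact pow_pos (Set.mem_Ioi.mp hy) s
    have h1 : Filter.Tendsto (fun y : ℝ => u' (y ^ s)) (nhdsWithin 0 (Set.Ioi 0)) (nhds 0) :=
      hbc0.comp h2
    have h3 : Filter.Tendsto (fun y : ℝ => (s:ℝ) * y ^ (s-1)) (nhdsWithin 0 (Set.Ioi 0))
        (nhds ((s:ℝ) * (0:ℝ) ^ (s-1))) :=
      ((continuous_const.mul (continuous_pow (s-1))).tendsto 0).mono_left nhdsWithin_le_nhds
    simpa using h1.mul h3
end

section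
/- Let d = −5 + 2√6 and define u(x) = 2·ln((d+1)/(d·x² + 1)) for x ∈ [0,1]. Then u satisfies u''(x) + (1/x)·u'(x) = e^{u(x)} for all 0 < x ≤ 1, u'(0) = 0, and u(1) = 0. -/
/-- The constant `d = −5 + 2√6`. -/
noncomputable def laneEmdenD : ℝ := -5 + 2 * Real.sqrt 6

/-- The function `u(x) = 2 ln((d+1)/(d x² + 1))` with `d = −5 + 2√6`. -/
noncomputable def laneEmdenEx1 (x : ℝ) : ℝ :=
  2 * Real.log ((laneEmdenD + 1) / (laneEmdenD * x ^ 2 + 1))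

lemma laneEmdenD_sq : Real.sqrt 6 ^ 2 = 6 := Real.sq_sqrt (by norm_num)

lemma laneEmdenD_lb : (2:ℝ) < Real.sqrt 6 := by
  nlinarith [laneEmdenD_sq, Real.sqrt_nonneg 6]

lemma laneEmdenD_ub : Real.sqrt 6 < 5/2 := by
  nlinarith [laneEmdenD_sq, Real.sqrt_nonneg 6]

lemma laneEmdenD_neg : laneEmdenD < 0 := by
  have := laneEmdenD_ub; unfold laneEmdenD; linarith

lemma laneEmdenD_add_one_pos : 0 < laneEmdenD + 1 := by
  have := laneEmdenD_lb; unfold laneEmdenD; linarith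

lemma laneEmden_key : (laneEmdenD + 1)^2 = -8 * laneEmdenD := by
  have := laneEmdenD_sq; unfold laneEmdenD; nlinarith

lemma laneEmden_hasDeriv (x : ℝ) (hg : laneEmdenD * x ^ 2 + 1 ≠ 0) :
    HasDerivAt laneEmdenEx1 (-4 * laneEmdenD * x / (laneEmdenD * x ^ 2 + 1)) x := by
  set c := laneEmdenD with hc
  have hc1 : c + 1 ≠ 0 := ne_of_gt laneEmdenD_add_one_pos
  have h1 : HasDerivAt (fun x : ℝ => c * x ^ 2 + 1) (c * (2 * x)) x := by
    simpa using ((hasDerivAt_pow 2 x).const_mul c).add_const 1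
  have h2 : HasDerivAt (fun x : ℝ => (c + 1) / (c * x ^ 2 + 1))
      ((0 * (c * x ^ 2 + 1) - (c + 1) * (c * (2 * x))) / (c * x ^ 2 + 1) ^ 2) x :=
    (hasDerivAt_const x (c + 1)).div h1 hg
  have hne : (c + 1) / (c * x ^ 2 + 1) ≠ 0 := div_ne_zero hc1 hg
  have h3 := (h2.log hne).const_mul 2
  refine h3.congr_deriv ?_
  field_simp
  ring

lemma laneEmden_deriv_eq (x : ℝ) (hg : laneEmdenD * x ^ 2 + 1 ≠ 0) :
    deriv laneEmdenEx1 x = -4 * laneEmdenD * x / (laneEmdenD * x ^ 2 + 1) :=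
  (laneEmden_hasDeriv x hg).deriv

/-- `u(x) = 2 ln((d+1)/(d x² + 1))`, `d = −5 + 2√6`, is the exact solution of
`u'' + (1/x) u' = e^u` on `(0,1]` with `u'(0) = 0` and `u(1) = 0`. -/
theorem laneEmden_example1_exact_solution :
    (∀ x ∈ Set.Ioc (0:ℝ) 1, DifferentiableAt ℝ laneEmdenEx1 x) ∧
    (∀ x ∈ Set.Ioc (0:ℝ) 1,
      HasDerivAt (deriv laneEmdenEx1)
        (Real.exp (laneEmdenEx1 x) - (1 / x) * deriv laneEmdenEx1 x) x) ∧
    HasDerivAt laneEmdenEx1 0 0 ∧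
    laneEmdenEx1 1 = 0 := by
  have hdneg := laneEmdenD_neg
  have hd1 := laneEmdenD_add_one_pos
  have hgpos : ∀ x : ℝ, x ∈ Set.Ioc (0:ℝ) 1 → 0 < laneEmdenD * x ^ 2 + 1 := by
    intro x hx
    have hx2 : x ^ 2 ≤ 1 := by nlinarith [hx.1, hx.2]
    nlinarith
  refine ⟨?_, ?_, ?_, ?_⟩
  · intro x hx
    exact (laneEmden_hasDeriv x (ne_of_gt (hgpos x hx))).differentiableAt
  · intro x hx
    have hgx := hgpos x hx
    have hgx' := ne_of_gt hgx
    set c := laneEmdenD with hc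
    -- the open set where g ≠ 0
    have hopen : IsOpen {y : ℝ | c * y ^ 2 + 1 ≠ 0} :=
      isOpen_ne.preimage (by continuity)
    have hmem : {y : ℝ | c * y ^ 2 + 1 ≠ 0} ∈ nhds x :=
      hopen.mem_nhds hgx'
    have heq : deriv laneEmdenEx1 =ᶠ[nhds x]
        fun y => -4 * c * y / (c * y ^ 2 + 1) :=
      Filter.eventuallyEq_of_mem hmem (fun y hy => laneEmden_deriv_eq y hy)
    have h1 : HasDerivAt (fun y : ℝ => c * y ^ 2 + 1) (c * (2 * x)) x := by
      simpa using ((hasDerivAt_pow 2 x).const_mul c).add_const 1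
    have h2 : HasDerivAt (fun y : ℝ => -4 * c * y) (-4 * c) x := by
      simpa using (hasDerivAt_id x).const_mul (-4 * c)
    have h3 : HasDerivAt (fun y : ℝ => -4 * c * y / (c * y ^ 2 + 1))
        ((-4 * c * (c * x ^ 2 + 1) - -4 * c * x * (c * (2 * x))) / (c * x ^ 2 + 1) ^ 2) x :=
      h2.div h1 hgx'
    have h4 := h3.congr_of_eventuallyEq heq
    refine h4.congr_deriv ?_
    have hx0 : x ≠ 0 := ne_of_gt hx.1
    rw [laneEmden_deriv_eq x hgx']
    have hexp : Real.exp (laneEmdenEx1 x) = (c + 1) ^ 2 / (c * x ^ 2 + 1) ^ 2 := by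
      unfold laneEmdenEx1
      rw [show (2:ℝ) * Real.log ((c + 1) / (c * x ^ 2 + 1))
            = Real.log (((c + 1) / (c * x ^ 2 + 1)) ^ 2) by
          rw [Real.log_pow]; push_cast; ring]
      rw [Real.exp_log (by positivity), div_pow]
    rw [hexp, laneEmden_key]
    rw [← hc]
    field_simp
    ring
  · have h := laneEmden_hasDeriv 0 (by norm_num)
    simpa using h
  · unfold laneEmdenEx1
    rw [one_pow, mul_one, div_self (ne_of_gt laneEmdenD_add_one_pos), Real.log_one, mul_zero]
end
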